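/- arXiv:0907.5467 — 6 statements merged into one kernel-verified Lean document; each statement's English description precedes it below -/
import Mathlib

section
/- (Positivity of the truncated eigenvalue.) Let κ be a fragmentation kernel satisfying (K1), let β ∈ L¹_loc(0,∞) ∩ P be nonnegative, let τ ∈ P be nonnegative with x^{α₀}τ(x) locally bounded on [0,∞) for some α₀ ≥ 0 and with τ ≥ m_K > 0 a.e. on every compact K ⊂ (0,∞), and assume xβ(x)/τ(x) → ∞ as x → ∞. Fix η > 0 and define τ_η := η on [0,η] and τ_η := τ on (η,∞), and for R > 0 set μ(R) := ess inf_{[0,R]} τ_η > 0. Then there exists R₀ > 0 such that for every R > R₀ the following holds: if δ = μ(R)/(2R) and (λ,U) solves the truncated eigenproblem on (0,R) with growth rate τ_η and inflow δ in integrated form, with U ≥ 0 and ∫₀ᴿ U = 1, then λ > 0. -/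
open MeasureTheory Set Filter
open scoped ENNReal NNReal

noncomputable section

/-- The kernel `κ(·,y)` is supported in `[0,y]`. -/
def KernelSupport (κ : ℝ → Measure ℝ) : Prop :=
  ∀ y : ℝ, 0 < y → κ y (Set.Icc 0 y)ᶜ = 0

/-- Measurability of `y ↦ ∫ ψ dκ(·,y)` for continuous `ψ`. -/
def KernelMeasurable (κ : ℝ → Measure ℝ) : Prop :=
  ∀ ψ : ℝ → ℝ, Continuous ψ → Measurable fun y => ∫ x, ψ x ∂(κ y)

/-- (K1): `κ(·,y)` is a probability measure. -/
def K1 (κ : ℝ → Measure ℝ) : Prop := ∀ y : ℝ, 0 < y → IsProbabilityMeasure (κ y)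

/-- (K2): `∫ x dκ(x,y) = y/2`. -/
def K2 (κ : ℝ → Measure ℝ) : Prop := ∀ y : ℝ, 0 < y → ∫ x, x ∂(κ y) = y / 2

/-- The class `P` of nonnegative measurable functions with polynomial upper and
lower control at infinity. -/
def MemP (f : ℝ → ℝ) : Prop :=
  Measurable f ∧ (∀ x : ℝ, 0 < x → 0 ≤ f x) ∧
  (∃ μ : ℝ, 0 ≤ μ ∧ ∃ M : ℝ, ∀ᶠ x in atTop, x ^ (-μ) * f x ≤ M) ∧
  (∃ ν : ℝ, 0 ≤ ν ∧ ∃ ε : ℝ, 0 < ε ∧ ∀ᶠ x in atTop, ε ≤ x ^ ν * f x)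

/-- `(lam, U)` solves the truncated eigenproblem, in integrated form with inflow
`δ`, on the interval `S` (`S = (0,R)`, or `S = (0,∞)` for `R = ∞`):
for a.e. `x ∈ S`,
`τ(x)U(x) + λ∫₀ˣU + ∫₀ˣβU = δ + 2∫_S β(y)U(y) κ([0,x],y) dy`. -/
def TruncEigen (τ β : ℝ → ℝ) (κ : ℝ → Measure ℝ) (δ : ℝ) (S : Set ℝ)
    (lam : ℝ) (U : ℝ → ℝ) : Prop :=
  IntegrableOn U S ∧ IntegrableOn (fun y => β y * U y) S ∧
  ∀ᵐ x ∂(volume.restrict S),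
    τ x * U x + lam * (∫ y in Set.Ioo 0 x, U y) + (∫ y in Set.Ioo 0 x, β y * U y)
      = δ + 2 * ∫ y in S, β y * U y * ((κ y) (Set.Icc 0 x)).toReal

open Topology

/-! Polynomial control of `τ` gives `τ ≤ M x^μ` at infinity and `ess inf_{[0,R]} τ_η ≥ c R^(-ν)`,
hence `δ ≥ c R^(-ν-1) / 2`; put `p := μ + ν + 1`. If `λ ≤ 0`, dropping `λ ∫₀ˣ U` and bounding the
fragmentation term from below by `G(x) = ∫₀ˣ βU` (for `y < x`, `κ(·,y)` is a probability measure
on `[0,y] ⊆ [0,x]`) gives `τ_η U ≥ δ + G` a.e. on `(0,R)`. Where `xβ/τ ≥ p` this yields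
`G' = βU ≥ p (δ + G) / x`, so by Gronwall `δ + G(x) ≥ δ (x/a)^p` on `[a,R]`. Integrating
`U ≥ (δ + G)/τ` over `(R/2,R)` bounds the mass of `U` below by a multiple of `R^(p-μ-ν) = R`,
contradicting `∫₀ᴿ U = 1` for large `R`. -/

theorem MemP.exists_eventually_le_mul_rpow {f : ℝ → ℝ} (hf : MemP f) :
    ∃ μ : ℝ, 0 ≤ μ ∧ ∃ M : ℝ, 0 < M ∧ ∀ᶠ x in atTop, f x ≤ M * x ^ μ := by
  obtain ⟨-, -, ⟨μ, hμ, M, hM⟩, -⟩ := hf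
  refine ⟨μ, hμ, max M 1, by positivity, ?_⟩
  filter_upwards [hM, eventually_gt_atTop 0] with x hx hx0
  rw [Real.rpow_neg hx0.le, inv_mul_le_iff₀ (by positivity)] at hx
  calc f x ≤ x ^ μ * M := hx
    _ ≤ max M 1 * x ^ μ := by rw [mul_comm]; gcongr; exact le_max_left M 1

theorem MemP.exists_eventually_mul_rpow_neg_le {f : ℝ → ℝ} (hf : MemP f) :
    ∃ ν : ℝ, 0 ≤ ν ∧ ∃ ε : ℝ, 0 < ε ∧ ∀ᶠ x in atTop, ε * x ^ (-ν) ≤ f x := by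
  obtain ⟨-, -, -, ⟨ν, hν, ε, hε, hlow⟩⟩ := hf
  refine ⟨ν, hν, ε, hε, ?_⟩
  filter_upwards [hlow, eventually_gt_atTop 0] with x hx hx0
  rwa [Real.rpow_neg hx0.le, ← div_eq_mul_inv, div_le_iff₀ (by positivity), mul_comm]

theorem eventually_pos_and_mul_div_le {β τ : ℝ → ℝ} {p : ℝ} (hp : 0 < p)
    (hτ : ∀ x : ℝ, 0 < x → 0 ≤ τ x) (h : Tendsto (fun x => x * β x / τ x) atTop atTop) :
    ∀ᶠ x in atTop, 0 < τ x ∧ p * τ x / x ≤ β x := by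
  filter_upwards [h.eventually_ge_atTop p, eventually_gt_atTop 0] with x hx hx0
  -- `x * β x / 0 = 0 < p` rules out `τ x = 0`.
  obtain hτ0 | hτx := (hτ x hx0).eq_or_lt
  · simp [← hτ0] at hx
    linarith
  rw [le_div_iff₀ hτx] at hx
  exact ⟨hτx, by rw [div_le_iff₀ hx0]; linarith⟩

theorem isCoboundedUnder_ge_ae {α : Type*} [MeasurableSpace α] {μ : Measure α} (hμ : μ ≠ 0)
    (f : α → ℝ) : IsCoboundedUnder (· ≥ ·) (ae μ) f := by
  have : (ae μ).NeBot := ae_neBot.2 hμ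
  by_contra h
  simp only [IsCoboundedUnder, IsCobounded, eventually_map, not_exists, not_forall] at h
  have hall : ∀ᵐ x ∂μ, ∀ n : ℕ, (n : ℝ) ≤ f x := by
    refine ae_all_iff.2 fun n => ?_
    obtain ⟨a, ha, hna⟩ := h n
    exact ha.mono fun x hx => (not_le.1 hna).le.trans hx
  obtain ⟨x, hx⟩ := hall.exists
  obtain ⟨n, hn⟩ := exists_nat_gt (f x)
  exact (hx n).not_gt hn

theorem exists_mul_rpow_neg_le_essInf {τ τη : ℝ → ℝ} {η ν ε : ℝ} (hη : 0 < η)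
    (hτη : ∀ x : ℝ, τη x = if x ≤ η then η else τ x)
    (hτpos : ∀ a b : ℝ, 0 < a →
      ∃ m : ℝ, 0 < m ∧ ∀ᵐ x ∂(volume : Measure ℝ), x ∈ Icc a b → m ≤ τ x)
    (hν : 0 ≤ ν) (hε : 0 < ε) (hτ_low : ∀ᶠ x in atTop, ε * x ^ (-ν) ≤ τ x) :
    ∃ c : ℝ, 0 < c ∧ ∀ R : ℝ, 1 ≤ R → c * R ^ (-ν) ≤ essInf τη (volume.restrict (Icc 0 R)) := by
  obtain ⟨X, hX⟩ := eventually_atTop.1 hτ_low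
  obtain ⟨m, hm, hmτ⟩ := hτpos η X hη
  set c := min η (min m ε)
  have hcm : c ≤ m := (min_le_right _ _).trans (min_le_left _ _)
  have hcε : c ≤ ε := (min_le_right _ _).trans (min_le_right _ _)
  refine ⟨c, by positivity, fun R hR => le_essInf_of_ae_le _ ?_
    (isCoboundedUnder_ge_ae (by simp [Measure.restrict_eq_zero]; linarith) _)⟩
  have hcR : c * R ^ (-ν) ≤ c :=
    mul_le_of_le_one_right (by positivity) (Real.rpow_le_one_of_one_le_of_nonpos hR (by linarith))
  filter_upwards [ae_restrict_mem measurableSet_Icc, ae_restrict_of_ae hmτ] with x hx hmx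
  rw [hτη x]
  split_ifs with hxη
  · exact hcR.trans (min_le_left _ _)
  rw [not_le] at hxη
  rcases le_or_gt x X with hxX | hxX
  · exact hcR.trans (hcm.trans (hmx ⟨hxη.le, hxX⟩))
  · calc c * R ^ (-ν) ≤ ε * x ^ (-ν) :=
          mul_le_mul hcε (Real.rpow_le_rpow_of_nonpos (hη.trans hxη) hx.2 (by linarith))
            (by positivity) hε.le
      _ ≤ τ x := hX x hxX.le

theorem KernelMeasurable.aemeasurable_toReal {κ : ℝ → Measure ℝ} (hκ : KernelMeasurable κ)
    {μ : Measure ℝ} (hfin : ∀ᵐ y ∂μ, IsFiniteMeasure (κ y)) {s : Set ℝ} (hs : IsClosed s) :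
    AEMeasurable (fun y => (κ y s).toReal) μ := by
  have hδ : ∀ n : ℕ, (0 : ℝ) < 1 / ((n : ℝ) + 1) := fun n => Nat.one_div_pos_of_nat
  set ψ : ℕ → ℝ → ℝ := fun n x => (thickenedIndicator (hδ n) s x : ℝ)
  have hψ_cont (n : ℕ) : Continuous (ψ n) :=
    NNReal.continuous_coe.comp (thickenedIndicator (hδ n) s).continuous
  have hψ_lim (x : ℝ) : Tendsto (ψ · x) atTop (𝓝 (s.indicator 1 x)) := by
    have h := tendsto_pi_nhds.1 (thickenedIndicator_tendsto_indicator_closure hδ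
      tendsto_one_div_add_atTop_nhds_zero_nat s) x
    rw [hs.closure_eq] at h
    convert (NNReal.continuous_coe.tendsto _).comp h using 2
    · rfl
    · by_cases hx : x ∈ s <;> simp [hx]
  refine aemeasurable_of_tendsto_metrizable_ae atTop
    (fun n => (hκ _ (hψ_cont n)).aemeasurable) ?_
  filter_upwards [hfin] with y hy
  have := tendsto_integral_of_dominated_convergence (μ := κ y) (fun _ => 1)
    (fun n => (hψ_cont n).aestronglyMeasurable) (integrable_const 1)
    (fun n => ae_of_all _ fun x => by simpa [ψ] using thickenedIndicator_le_one (hδ n) s x)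
    (ae_of_all _ hψ_lim)
  rwa [integral_indicator_one hs.measurableSet] at this

theorem KernelSupport.measure_Icc_eq_one {κ : ℝ → Measure ℝ} (hκ : KernelSupport κ) (hK1 : K1 κ)
    {x y : ℝ} (hy : 0 < y) (hyx : y ≤ x) : κ y (Icc 0 x) = 1 := by
  have := hK1 y hy
  exact (prob_compl_eq_zero_iff measurableSet_Icc).1 <|
    measure_mono_null (compl_subset_compl.2 (Icc_subset_Icc_right hyx)) (hκ y hy)

theorem setIntegral_le_setIntegral_mul_of_eqOn_one {α : Type*} [MeasurableSpace α]
    {μ : Measure α} {f w : α → ℝ} {s t : Set α} (hts : t ⊆ s) (ht : MeasurableSet t)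
    (hf : IntegrableOn f s μ) (hf0 : 0 ≤ᵐ[μ.restrict s] f)
    (hw : AEStronglyMeasurable w (μ.restrict s)) (hw01 : ∀ᵐ x ∂μ.restrict s, w x ∈ Icc 0 1)
    (hwt : EqOn w 1 t) :
    ∫ x in t, f x ∂μ ≤ ∫ x in s, f x * w x ∂μ := by
  have hfw : IntegrableOn (fun x => f x * w x) s μ :=
    hf.mul_bdd hw (hw01.mono fun x hx => by simpa [abs_of_nonneg hx.1] using hx.2)
  calc ∫ x in t, f x ∂μ = ∫ x in t, f x * w x ∂μ :=
        setIntegral_congr_fun ht fun x hx => by simp [hwt hx]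
    _ ≤ ∫ x in s, f x * w x ∂μ := by
        refine setIntegral_mono_set hfw ?_ hts.eventuallyLE
        filter_upwards [hf0, hw01] with x hfx hwx using mul_nonneg hfx hwx.1

theorem TruncEigen.add_setIntegral_le_mul {τ β : ℝ → ℝ} {κ : ℝ → Measure ℝ} {δ R lam : ℝ}
    {U : ℝ → ℝ} (hsupp : KernelSupport κ) (hmeas : KernelMeasurable κ) (hK1 : K1 κ)
    (hβ : ∀ y ∈ Ioo 0 R, 0 ≤ β y) (hE : TruncEigen τ β κ δ (Ioo 0 R) lam U)
    (hU : ∀ᵐ x ∂(volume.restrict (Ioo 0 R)), 0 ≤ U x) (hlam : lam ≤ 0) :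
    ∀ᵐ x ∂(volume.restrict (Ioo 0 R)), δ + ∫ y in Ioo 0 x, β y * U y ≤ τ x * U x := by
  obtain ⟨-, hβU, heq⟩ := hE
  have hmem := ae_restrict_mem (μ := volume) (measurableSet_Ioo (a := (0 : ℝ)) (b := R))
  have hβU0 : 0 ≤ᵐ[volume.restrict (Ioo 0 R)] fun y => β y * U y := by
    filter_upwards [hU, hmem] with y hUy hy using mul_nonneg (hβ y hy) hUy
  have hprob : ∀ᵐ y ∂(volume.restrict (Ioo 0 R)), IsProbabilityMeasure (κ y) := by
    filter_upwards [hmem] with y hy using hK1 y hy.1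
  filter_upwards [heq, hmem] with x hx hxR
  have hkernel : ∫ y in Ioo 0 x, β y * U y
      ≤ ∫ y in Ioo 0 R, β y * U y * (κ y (Icc 0 x)).toReal := by
    refine setIntegral_le_setIntegral_mul_of_eqOn_one (Ioo_subset_Ioo_right hxR.2.le)
      measurableSet_Ioo hβU hβU0 ?_ ?_ fun y hy => ?_
    · exact (hmeas.aemeasurable_toReal (hprob.mono fun y _ => inferInstance)
        isClosed_Icc).aestronglyMeasurable
    · filter_upwards [hprob] with y _ using ⟨ENNReal.toReal_nonneg,
        ENNReal.toReal_le_of_le_ofReal zero_le_one (by simpa using prob_le_one)⟩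
    · simp [hsupp.measure_Icc_eq_one hK1 hy.1 hy.2.le]
  have hmass : 0 ≤ ∫ y in Ioo 0 x, U y :=
    setIntegral_nonneg_of_ae_restrict
      (ae_restrict_of_ae_restrict_of_subset (Ioo_subset_Ioo_right hxR.2.le) hU)
  linarith [mul_nonpos_of_nonpos_of_nonneg hlam hmass]

theorem mul_div_rpow_le_of_le_add_integral {H : ℝ → ℝ} {a b p : ℝ} (ha : 0 < a) (hp : 0 ≤ p)
    (hH : ContinuousOn H (Icc a b))
    (hle : ∀ x ∈ Icc a b, H a + ∫ t in a..x, p / t * H t ≤ H x) {x : ℝ} (hx : x ∈ Icc a b) :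
    H a * (x / a) ^ p ≤ H x := by
  have hpos : ∀ t ∈ Icc a b, 0 < t := fun t ht => ha.trans_le ht.1
  have hab : a ≤ b := hx.1.trans hx.2
  set g : ℝ → ℝ := fun t => p / t * H t
  set F : ℝ → ℝ := fun x => H a + ∫ t in a..x, g t
  have hg : ContinuousOn g (Icc a b) :=
    (continuousOn_const.div continuousOn_id fun t ht => (hpos t ht).ne').mul hH
  have hF : ContinuousOn F (Icc a b) := by
    refine continuousOn_const.add ?_
    rw [← uIcc_of_le hab] at hg ⊢
    exact intervalIntegral.continuousOn_primitive_interval hg.integrableOn_Icc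
  have hF' : ∀ t ∈ Ioo a b, HasDerivAt F (g t) t := fun t ht =>
    (intervalIntegral.integral_hasDerivAt_right
      ((hg.mono (Icc_subset_Icc_right ht.2.le)).intervalIntegrable_of_Icc ht.1.le)
      ((hg.mono Ioo_subset_Icc_self).stronglyMeasurableAtFilter isOpen_Ioo t ht)
      (hg.continuousAt (Icc_mem_nhds ht.1 ht.2))).const_add _
  -- `F t * t ^ (-p)` is nondecreasing, since `F' = p / t * H ≥ p / t * F`.
  have hmono : MonotoneOn (fun t => F t * t ^ (-p)) (Icc a b) := by
    refine monotoneOn_of_hasDerivWithinAt_nonneg (f' := fun t => p / t * t ^ (-p) * (H t - F t))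
      (convex_Icc a b) (hF.mul (continuousOn_id.rpow_const fun t ht => Or.inl (hpos t ht).ne'))
      (fun t ht => ?_) (fun t ht => ?_) <;> rw [interior_Icc] at ht
    · have ht0 : 0 < t := ha.trans ht.1
      refine (((hF' t ht).mul (Real.hasDerivAt_rpow_const (Or.inl ht0.ne'))).congr_deriv
        ?_).hasDerivWithinAt
      rw [Real.rpow_sub_one ht0.ne']
      simp only [g]
      ring
    · have ht0 : 0 < t := ha.trans ht.1
      have hFH : F t ≤ H t := hle t (Ioo_subset_Icc_self ht)
      exact mul_nonneg (mul_nonneg (div_nonneg hp ht0.le) (Real.rpow_nonneg ht0.le _))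
        (sub_nonneg.2 hFH)
  have hx0 : 0 < x := hpos x hx
  have h : H a * a ^ (-p) ≤ F x * x ^ (-p) := by
    simpa [F] using hmono ⟨le_rfl, hab⟩ hx hx.1
  rw [Real.rpow_neg ha.le, Real.rpow_neg hx0.le, ← div_eq_mul_inv, ← div_eq_mul_inv,
    div_le_div_iff₀ (by positivity) (by positivity)] at h
  calc H a * (x / a) ^ p = H a * x ^ p / a ^ p := by rw [Real.div_rpow hx0.le ha.le]; ring
    _ ≤ F x := by rw [div_le_iff₀ (by positivity)]; linarith
    _ ≤ H x := hle x hx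

theorem mul_div_rpow_le_add_setIntegral {β τ U : ℝ → ℝ} {δ a p R : ℝ} (ha : 0 < a)
    (hp : 0 ≤ p) (hδ : 0 ≤ δ) (hβ : ∀ y ∈ Ioo 0 R, 0 ≤ β y)
    (hU : ∀ᵐ y ∂(volume.restrict (Ioo 0 R)), 0 ≤ U y)
    (hβU : IntegrableOn (fun y => β y * U y) (Ioo 0 R))
    (hτ : ∀ x ∈ Icc a R, 0 < τ x) (hβτ : ∀ x ∈ Icc a R, p * τ x / x ≤ β x)
    (hkey : ∀ᵐ x ∂(volume.restrict (Ioo 0 R)), δ + ∫ y in Ioo 0 x, β y * U y ≤ τ x * U x)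
    {x : ℝ} (hx : x ∈ Icc a R) :
    δ * (x / a) ^ p ≤ δ + ∫ y in Ioo 0 x, β y * U y := by
  set f := (Ioo 0 R).indicator fun y => β y * U y
  have hf : Integrable f := hβU.integrable_indicator measurableSet_Ioo
  set H : ℝ → ℝ := fun x => δ + ∫ y in 0..x, f y
  have hH_cont : Continuous H := continuous_const.add (hf.continuous_primitive 0)
  have hH_eq : ∀ x ∈ Icc 0 R, H x = δ + ∫ y in Ioo 0 x, β y * U y := by
    intro x hx
    simp only [H, f]
    rw [intervalIntegral.integral_of_le hx.1, integral_Ioc_eq_integral_Ioo,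
      integral_indicator measurableSet_Ioo, Measure.restrict_restrict measurableSet_Ioo,
      Ioo_inter_Ioo, max_self, min_eq_right hx.2]
  have hf0 : 0 ≤ᵐ[volume] f := by
    filter_upwards [(ae_restrict_iff' measurableSet_Ioo).1 hU] with y hy
    by_cases hyR : y ∈ Ioo 0 R
    · simpa [f, hyR] using mul_nonneg (hβ y hyR) (hy hyR)
    · simp [f, hyR]
  have hH_ge : ∀ x, 0 ≤ x → δ ≤ H x := fun x hx =>
    le_add_of_nonneg_right (intervalIntegral.integral_nonneg_of_ae hx hf0)
  have hgrowth : ∀ x ∈ Icc a R, H a + ∫ t in a..x, p / t * H t ≤ H x := by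
    intro x hx
    have hHx : H x = H a + ∫ t in a..x, f t := by
      simp only [H, add_assoc]
      rw [intervalIntegral.integral_add_adjacent_intervals hf.intervalIntegrable
        hf.intervalIntegrable]
    rw [hHx, add_le_add_iff_left]
    refine intervalIntegral.integral_mono_ae_restrict hx.1 ?_ hf.intervalIntegrable ?_
    · refine ContinuousOn.intervalIntegrable fun t ht => ?_
      rw [uIcc_of_le hx.1] at ht
      exact ((continuousAt_const.div continuousAt_id (ha.trans_le ht.1).ne').mul
        hH_cont.continuousAt).continuousWithinAt
    · rw [← Measure.restrict_congr_set Ioo_ae_eq_Icc]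
      have hsub : Ioo a x ⊆ Ioo 0 R := Ioo_subset_Ioo ha.le hx.2
      filter_upwards [ae_restrict_of_ae_restrict_of_subset hsub hkey,
        ae_restrict_of_ae_restrict_of_subset hsub hU, ae_restrict_mem measurableSet_Ioo]
        with t hkeyt hUt ht
      have htR : t ∈ Icc a R := ⟨ht.1.le, ht.2.le.trans hx.2⟩
      have hτt := hτ t htR
      have hHt : H t ≤ τ t * U t := by rwa [hH_eq t ⟨ha.le.trans htR.1, htR.2⟩]
      have hH0 : 0 ≤ H t := hδ.trans (hH_ge t (ha.le.trans htR.1))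
      calc p / t * H t = p * τ t / t * (H t / τ t) := by field_simp
        _ ≤ β t * (H t / τ t) := by gcongr; exact hβτ t htR
        _ ≤ β t * U t := by
            gcongr
            · exact hβ t (hsub ht)
            · rwa [div_le_iff₀ hτt, mul_comm]
        _ = f t := (indicator_of_mem (hsub ht) (fun y => β y * U y)).symm
  calc δ * (x / a) ^ p ≤ H a * (x / a) ^ p :=
        mul_le_mul_of_nonneg_right (hH_ge a ha.le)
          (Real.rpow_nonneg (div_nonneg (ha.le.trans hx.1) ha.le) _)
    _ ≤ H x := mul_div_rpow_le_of_le_add_integral ha hp hH_cont.continuousOn hgrowth hx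
    _ = _ := hH_eq x ⟨ha.le.trans hx.1, hx.2⟩

theorem TruncEigen.mul_le_setIntegral_of_nonpos {τ β : ℝ → ℝ} {κ : ℝ → Measure ℝ}
    {δ R lam : ℝ} {U : ℝ → ℝ} (hsupp : KernelSupport κ) (hmeas : KernelMeasurable κ)
    (hK1 : K1 κ) (hβ : ∀ y ∈ Ioo 0 R, 0 ≤ β y) (hE : TruncEigen τ β κ δ (Ioo 0 R) lam U)
    (hU : ∀ᵐ x ∂(volume.restrict (Ioo 0 R)), 0 ≤ U x) (hlam : lam ≤ 0) {a p T : ℝ}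
    (ha : 0 < a) (haR : 2 * a ≤ R) (hp : 0 ≤ p) (hδ : 0 ≤ δ)
    (hτ : ∀ x ∈ Icc a R, 0 < τ x ∧ τ x ≤ T) (hβτ : ∀ x ∈ Icc a R, p * τ x / x ≤ β x) :
    R / 2 * (δ * (R / (2 * a)) ^ p / T) ≤ ∫ x in Ioo 0 R, U x := by
  have hkey := hE.add_setIntegral_le_mul hsupp hmeas hK1 hβ hU hlam
  have hR : 0 < R := by linarith
  have hsub : Ioo (R / 2) R ⊆ Ioo 0 R := Ioo_subset_Ioo_left (by linarith)
  have hbound : ∀ᵐ x ∂(volume.restrict (Ioo (R / 2) R)), δ * (R / (2 * a)) ^ p / T ≤ U x := by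
    filter_upwards [ae_restrict_of_ae_restrict_of_subset hsub hkey,
      ae_restrict_mem measurableSet_Ioo] with x hkeyx hx
    have hxR : x ∈ Icc a R := ⟨by linarith [hx.1], hx.2.le⟩
    have hx0 : 0 < x := ha.trans_le hxR.1
    obtain ⟨hτx, hτxT⟩ := hτ x hxR
    have hgrowth := mul_div_rpow_le_add_setIntegral ha hp hδ hβ hU hE.2.1
      (fun y hy => (hτ y hy).1) hβτ hkey hxR
    calc δ * (R / (2 * a)) ^ p / T ≤ δ * (x / a) ^ p / τ x := by
          have hbase : R / (2 * a) ≤ x / a := by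
            rw [div_le_div_iff₀ (by positivity) ha]
            nlinarith [hx.1]
          gcongr δ * (?_ ^ p) / ?_
      _ ≤ U x := by
          rw [div_le_iff₀ hτx]
          linarith
  have hUint : IntegrableOn U (Ioo 0 R) := hE.1
  calc R / 2 * (δ * (R / (2 * a)) ^ p / T) = ∫ _ in Ioo (R / 2) R, δ * (R / (2 * a)) ^ p / T := by
        rw [setIntegral_const, Real.volume_real_Ioo_of_le (by linarith), smul_eq_mul]
        ring
    _ ≤ ∫ x in Ioo (R / 2) R, U x :=
        setIntegral_mono_ae_restrict (integrableOn_const measure_Ioo_lt_top.ne)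
          (hUint.mono_set hsub) hbound
    _ ≤ ∫ x in Ioo 0 R, U x := setIntegral_mono_set hUint hU hsub.eventuallyLE

theorem TruncEigen.mul_le_setIntegral_of_rpow_bounds {τ β : ℝ → ℝ} {κ : ℝ → Measure ℝ}
    {δ R lam : ℝ} {U : ℝ → ℝ} (hsupp : KernelSupport κ) (hmeas : KernelMeasurable κ)
    (hK1 : K1 κ) (hβ : ∀ y ∈ Ioo 0 R, 0 ≤ β y) (hE : TruncEigen τ β κ δ (Ioo 0 R) lam U)
    (hU : ∀ᵐ x ∂(volume.restrict (Ioo 0 R)), 0 ≤ U x) (hlam : lam ≤ 0) {a c M μ ν : ℝ}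
    (ha : 0 < a) (haR : 2 * a ≤ R) (hc : 0 ≤ c) (hM : 0 < M) (hμ : 0 ≤ μ) (hν : 0 ≤ ν)
    (hδ : c * R ^ (-ν) / (2 * R) ≤ δ) (hτ : ∀ x ∈ Icc a R, 0 < τ x ∧ τ x ≤ M * x ^ μ)
    (hβτ : ∀ x ∈ Icc a R, (μ + ν + 1) * τ x / x ≤ β x) :
    c / (4 * M * (2 * a) ^ (μ + ν + 1)) * R ≤ ∫ x in Ioo 0 R, U x := by
  have hR : 0 < R := by linarith
  have hτ_le : ∀ x ∈ Icc a R, 0 < τ x ∧ τ x ≤ M * R ^ μ := fun x hx =>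
    ⟨(hτ x hx).1, (hτ x hx).2.trans <|
      mul_le_mul_of_nonneg_left (Real.rpow_le_rpow (ha.trans_le hx.1).le hx.2 hμ) hM.le⟩
  calc c / (4 * M * (2 * a) ^ (μ + ν + 1)) * R
      = R / 2 * (c * R ^ (-ν) / (2 * R) * (R / (2 * a)) ^ (μ + ν + 1) / (M * R ^ μ)) := by
        rw [Real.div_rpow hR.le (by positivity), Real.rpow_add hR, Real.rpow_add hR,
          Real.rpow_one, Real.rpow_neg hR.le]
        field_simp
        ring
    _ ≤ R / 2 * (δ * (R / (2 * a)) ^ (μ + ν + 1) / (M * R ^ μ)) := by gcongr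
    _ ≤ ∫ x in Ioo 0 R, U x :=
        hE.mul_le_setIntegral_of_nonpos hsupp hmeas hK1 hβ hU hlam ha haR (by positivity)
          (hδ.trans' (by positivity)) hτ_le hβτ

theorem truncated_eigenvalue_positive_general
    (κ : ℝ → Measure ℝ) (τ β : ℝ → ℝ)
    (hκsupp : KernelSupport κ) (hκmeas : KernelMeasurable κ) (hK1 : K1 κ)
    (hβP : MemP β) (hτP : MemP τ)
    (hτpos : ∀ a b : ℝ, 0 < a →
      ∃ m : ℝ, 0 < m ∧ ∀ᵐ x ∂(volume : Measure ℝ), x ∈ Set.Icc a b → m ≤ τ x)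
    (hβτinf : Tendsto (fun x => x * β x / τ x) atTop atTop)
    (η : ℝ) (hη : 0 < η)
    (τη : ℝ → ℝ) (hτη : ∀ x : ℝ, τη x = if x ≤ η then η else τ x) :
    ∃ R₀ : ℝ, 0 < R₀ ∧ ∀ R : ℝ, R₀ < R → ∀ δ lam : ℝ, ∀ U : ℝ → ℝ,
      δ = essInf τη (volume.restrict (Set.Icc (0:ℝ) R)) / (2 * R) →
      TruncEigen τη β κ δ (Set.Ioo 0 R) lam U →
      (∀ᵐ x ∂(volume.restrict (Set.Ioo (0:ℝ) R)), 0 ≤ U x) →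
      (∫ x in Set.Ioo (0:ℝ) R, U x = 1) →
      0 < lam := by
  obtain ⟨μ, hμ, M, hM, hτ_up⟩ := hτP.exists_eventually_le_mul_rpow
  obtain ⟨ν, hν, ε, hε, hτ_low⟩ := hτP.exists_eventually_mul_rpow_neg_le
  obtain ⟨c, hc, hτη_low⟩ := exists_mul_rpow_neg_le_essInf hη hτη hτpos hν hε hτ_low
  have hτη_ev : ∀ᶠ x in atTop,
      (0 < τη x ∧ τη x ≤ M * x ^ μ ∧ (μ + ν + 1) * τη x / x ≤ β x) ∧ 1 ≤ x := by
    filter_upwards [hτ_up,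
      eventually_pos_and_mul_div_le (p := μ + ν + 1) (by positivity) hτP.2.1 hβτinf,
      eventually_gt_atTop η, eventually_ge_atTop 1] with x hup ⟨hpos, hβx⟩ hxη hx1
    rw [hτη x, if_neg hxη.not_ge]
    exact ⟨⟨hpos, hup, hβx⟩, hx1⟩
  obtain ⟨a, ha⟩ := eventually_atTop.1 hτη_ev
  have ha1 : 1 ≤ a := (ha a le_rfl).2
  set C := c / (4 * M * (2 * a) ^ (μ + ν + 1))
  refine ⟨max (2 * a) (1 / C), by positivity, fun R hR δ lam U hδ hE hU hmass => ?_⟩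
  by_contra! hlam
  have h2a : 2 * a ≤ R := (le_max_left _ _).trans hR.le
  have hCR : 1 < C * R := by
    rw [← div_lt_iff₀' (by positivity)]
    exact (le_max_right _ _).trans_lt hR
  have hδ_low : c * R ^ (-ν) / (2 * R) ≤ δ :=
    hδ ▸ div_le_div_of_nonneg_right (hτη_low R (by linarith)) (by linarith)
  have hmass_low := hE.mul_le_setIntegral_of_rpow_bounds hκsupp hκmeas hK1
    (fun y hy => hβP.2.1 y hy.1) hU hlam (by linarith) h2a hc.le hM hμ hν hδ_low
    (fun x hx => (ha x hx.1).1.imp_right And.left) (fun x hx => (ha x hx.1).1.2.2)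
  linarith

/-- **Lemma 2 (Positivity of the truncated eigenvalue).** With `τ_η = max(τ,·)`
regularised near `0` by the constant `η`, and `μ(R)` the essential infimum of
`τ_η` on `[0,R]`, there is `R₀ > 0` such that for `R > R₀` and inflow
`δ = μ(R)/(2R)`, any normalised nonnegative solution of the truncated
eigenproblem on `(0,R)` has a positive eigenvalue. -/
theorem truncated_eigenvalue_positive
    (κ : ℝ → Measure ℝ) (τ β : ℝ → ℝ)
    (hκfin : ∀ y : ℝ, 0 < y → IsFiniteMeasure (κ y))
    (hκsupp : KernelSupport κ) (hκmeas : KernelMeasurable κ) (hK1 : K1 κ)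
    (hβP : MemP β) (hβloc : ∀ a b : ℝ, 0 < a → IntegrableOn β (Set.Icc a b))
    (α₀ : ℝ) (hα₀ : 0 ≤ α₀) (hτP : MemP τ)
    (hτloc : ∀ A : ℝ, 0 < A → ∃ M : ℝ, ∀ x ∈ Set.Icc (0:ℝ) A, x ^ α₀ * τ x ≤ M)
    (hτpos : ∀ a b : ℝ, 0 < a →
      ∃ m : ℝ, 0 < m ∧ ∀ᵐ x ∂(volume : Measure ℝ), x ∈ Set.Icc a b → m ≤ τ x)
    (hβτinf : Tendsto (fun x => x * β x / τ x) atTop atTop)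
    (η : ℝ) (hη : 0 < η)
    (τη : ℝ → ℝ) (hτη : ∀ x : ℝ, τη x = if x ≤ η then η else τ x) :
    ∃ R₀ : ℝ, 0 < R₀ ∧ ∀ R : ℝ, R₀ < R → ∀ δ lam : ℝ, ∀ U : ℝ → ℝ,
      δ = essInf τη (volume.restrict (Set.Icc (0:ℝ) R)) / (2 * R) →
      TruncEigen τη β κ δ (Set.Ioo 0 R) lam U →
      (∀ᵐ x ∂(volume.restrict (Set.Ioo (0:ℝ) R)), 0 ≤ U x) →
      (∫ x in Set.Ioo (0:ℝ) R, U x = 1) →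
      0 < lam :=
  truncated_eigenvalue_positive_general κ τ β hκsupp hκmeas hK1 hβP hτP hτpos hβτinf η hη τη hτη
end
end

section
/- (Interior mass of the fragmentation kernel.) Let κ be a fragmentation kernel satisfying (K1) and (K2), and suppose there exist C > 0 and γ > 0 such that κ([0,x],y) ≤ C(x/y)^γ for all 0 < x ≤ y. Then for every y > 0 and every η ∈ (0,1/2): κ([ηy,(1−η)y], y) ≥ 1 − Cη^γ − 1/(2(1−η)). Consequently, inf_{y>0} lim_{η→0⁺} κ([ηy,(1−η)y], y) ≥ 1/2 > 0. -/
open MeasureTheory Set Filter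
open scoped ENNReal NNReal

noncomputable section

/-- (K3): the second moment of `κ` is uniformly less than `1/2`. -/
def K3 (κ : ℝ → Measure ℝ) : Prop :=
  ∃ c : ℝ, c < 1 / 2 ∧ ∀ y : ℝ, 0 < y → (∫ x, (x / y) ^ 2 ∂(κ y)) ≤ c

/-!
Since `κ(·,y)` has mean `y/2`, Markov's inequality bounds its mass beyond `(1-η)y` by
`1/(2(1-η))`, and the no-shattering bound controls its mass on `[0,ηy]` by `Cη^γ`; what is
left of the total mass `1` lies in `[ηy,(1-η)y]`. As `η → 0⁺` the lower bound tends to `1/2`.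
-/

section ProbabilityOnReals

variable {μ : Measure ℝ}

theorem measureReal_Ioi_le_integral_div [IsFiniteMeasure μ] (h0 : 0 ≤ᵐ[μ] fun x => x)
    (hint : Integrable (fun x => x) μ) {b : ℝ} (hb : 0 < b) :
    μ.real (Ioi b) ≤ (∫ x, x ∂μ) / b := by
  rw [le_div_iff₀ hb, mul_comm]
  calc b * μ.real (Ioi b) ≤ b * μ.real {x | b ≤ x} :=
        mul_le_mul_of_nonneg_left (measureReal_mono Ioi_subset_Ici_self) hb.le
    _ ≤ ∫ x, x ∂μ := mul_meas_ge_le_integral_of_nonneg h0 hint b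

theorem one_sub_le_measureReal_Icc [IsProbabilityMeasure μ] (h0 : μ (Iio 0) = 0) (a b : ℝ) :
    1 - μ.real (Icc 0 a) - μ.real (Ioi b) ≤ μ.real (Icc a b) := by
  have hcover : univ ⊆ Iio 0 ∪ Icc 0 a ∪ Icc a b ∪ Ioi b := by
    intro x _
    simp only [mem_union, mem_Iio, mem_Icc, mem_Ioi]
    grind
  have hIio : μ.real (Iio 0) = 0 := by simp [Measure.real, h0]
  have := calc
    1 = μ.real univ := probReal_univ.symm
    _ ≤ μ.real (Iio 0 ∪ Icc 0 a ∪ Icc a b ∪ Ioi b) := measureReal_mono hcover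
    _ ≤ μ.real (Iio 0) + μ.real (Icc 0 a) + μ.real (Icc a b) + μ.real (Ioi b) := by
      grw [measureReal_union_le, measureReal_union_le, measureReal_union_le]
  linarith

end ProbabilityOnReals

section FragmentationKernel

variable {κ : ℝ → Measure ℝ} {y : ℝ}

theorem KernelSupport.ae_mem_Icc (hκ : KernelSupport κ) (hy : 0 < y) :
    ∀ᵐ x ∂κ y, x ∈ Icc 0 y :=
  ae_iff.2 (hκ y hy)

theorem KernelSupport.measure_Iio_zero (hκ : KernelSupport κ) (hy : 0 < y) :
    κ y (Iio 0) = 0 :=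
  measure_mono_null (fun x (hx : x < 0) (hmem : x ∈ Icc 0 y) => hx.not_ge hmem.1) (hκ y hy)

theorem KernelSupport.integrable_id (hκ : KernelSupport κ) (hy : 0 < y)
    [IsFiniteMeasure (κ y)] : Integrable (fun x => x) (κ y) :=
  Integrable.of_bound measurable_id.aestronglyMeasurable y <|
    (hκ.ae_mem_Icc hy).mono fun x hx => by rw [Real.norm_of_nonneg hx.1]; exact hx.2

theorem kernel_measureReal_Ioi_le (hsupp : KernelSupport κ) (hK1 : K1 κ) (hK2 : K2 κ)
    (hy : 0 < y) {b : ℝ} (hb : 0 < b) : (κ y).real (Ioi b) ≤ y / (2 * b) := by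
  have := hK1 y hy
  have h0 : 0 ≤ᵐ[κ y] fun x => x := (hsupp.ae_mem_Icc hy).mono fun _ hx => hx.1
  calc (κ y).real (Ioi b) ≤ (∫ x, x ∂κ y) / b :=
        measureReal_Ioi_le_integral_div h0 (hsupp.integrable_id hy) hb
    _ = y / (2 * b) := by rw [hK2 y hy, div_div]

theorem kernel_interior_mass_ge (hsupp : KernelSupport κ) (hK1 : K1 κ) (hK2 : K2 κ)
    {C γ : ℝ} (hbound : ∀ x y : ℝ, 0 < x → x ≤ y → (κ y).real (Icc 0 x) ≤ C * (x / y) ^ γ)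
    (hy : 0 < y) {η : ℝ} (hη : 0 < η) (hη1 : η < 1) :
    1 - C * η ^ γ - 1 / (2 * (1 - η)) ≤ (κ y).real (Icc (η * y) ((1 - η) * y)) := by
  have := hK1 y hy
  have hlow : (κ y).real (Icc 0 (η * y)) ≤ C * η ^ γ := by
    simpa [mul_div_assoc, hy.ne'] using
      hbound (η * y) y (by positivity) (mul_le_of_le_one_left hy.le (by linarith))
  have hhigh : (κ y).real (Ioi ((1 - η) * y)) ≤ 1 / (2 * (1 - η)) := by
    have h := kernel_measureReal_Ioi_le hsupp hK1 hK2 hy (b := (1 - η) * y)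
      (mul_pos (by linarith) hy)
    rwa [← mul_assoc, div_mul_cancel_right₀ hy.ne', ← one_div] at h
  linarith [one_sub_le_measureReal_Icc (hsupp.measure_Iio_zero hy) (η * y) ((1 - η) * y)]

end FragmentationKernel

theorem le_liminf_of_tendsto_of_eventuallyLE {α : Type*} {l : Filter α} [l.NeBot]
    {f g : α → ℝ} {L : ℝ} (hg : Tendsto g l (nhds L)) (hgf : g ≤ᶠ[l] f)
    (hf : IsCoboundedUnder (· ≥ ·) l f) : L ≤ liminf f l :=
  hg.liminf_eq ▸ liminf_le_liminf hgf hg.isBoundedUnder_ge hf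

theorem tendsto_interior_mass_bound {C γ : ℝ} (hγ : 0 < γ) :
    Tendsto (fun η : ℝ => 1 - C * η ^ γ - 1 / (2 * (1 - η))) (nhdsWithin 0 (Ioi 0))
      (nhds (1 / 2)) := by
  have hcont : ContinuousAt (fun η : ℝ => 1 - C * η ^ γ - 1 / (2 * (1 - η))) 0 :=
    (continuousAt_const.sub (continuousAt_const.mul
      (Real.continuousAt_rpow_const 0 γ (Or.inr hγ.le)))).sub
      (continuousAt_const.div (continuousAt_const.mul (continuousAt_const.sub continuousAt_id))
        (by norm_num))
  have hval : 1 - C * (0 : ℝ) ^ γ - 1 / (2 * (1 - 0)) = 1 / 2 := by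
    rw [Real.zero_rpow hγ.ne']; norm_num
  exact hval ▸ hcont.tendsto.mono_left nhdsWithin_le_nhds

theorem kernel_interior_mass_general
    (κ : ℝ → Measure ℝ)
    (hκsupp : KernelSupport κ)
    (hK1 : K1 κ) (hK2 : K2 κ)
    (C γ : ℝ) (hγ : 0 < γ)
    (hbound : ∀ x y : ℝ, 0 < x → x ≤ y →
      ((κ y) (Set.Icc 0 x)).toReal ≤ C * (x / y) ^ γ) :
    (∀ y : ℝ, 0 < y → ∀ η : ℝ, 0 < η → η < 1 / 2 →
      1 - C * η ^ γ - 1 / (2 * (1 - η))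
        ≤ ((κ y) (Set.Icc (η * y) ((1 - η) * y))).toReal) ∧
    (∀ y : ℝ, 0 < y →
      (1 : ℝ) / 2 ≤ liminf (fun η : ℝ => ((κ y) (Set.Icc (η * y) ((1 - η) * y))).toReal)
        (nhdsWithin 0 (Set.Ioi 0))) := by
  have hmass := fun y (hy : 0 < y) η (hη : 0 < η) (hη2 : η < 1 / 2) =>
    kernel_interior_mass_ge hκsupp hK1 hK2 hbound hy hη (by linarith)
  refine ⟨hmass, fun y hy => ?_⟩
  have := hK1 y hy
  refine le_liminf_of_tendsto_of_eventuallyLE (tendsto_interior_mass_bound (C := C) hγ) ?_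
    (isCoboundedUnder_ge_of_le _ fun _ => measureReal_le_one)
  filter_upwards [Ioo_mem_nhdsGT (by norm_num : (0 : ℝ) < 1 / 2)] with η hη
  exact hmass y hy η hη.1 hη.2

/-- **Interior mass of the fragmentation kernel.** Under (K1), (K2) and the
no-shattering bound `κ([0,x],y) ≤ C(x/y)^γ` with `γ > 0`, the mass of
`κ(·,y)` on `[ηy,(1-η)y]` is at least `1 - Cη^γ - 1/(2(1-η))`; consequently
its liminf as `η → 0⁺` is at least `1/2 > 0`, uniformly in `y`. -/
theorem kernel_interior_mass
    (κ : ℝ → Measure ℝ)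
    (hκfin : ∀ y : ℝ, 0 < y → IsFiniteMeasure (κ y))
    (hκsupp : KernelSupport κ) (hκmeas : KernelMeasurable κ)
    (hK1 : K1 κ) (hK2 : K2 κ)
    (C γ : ℝ) (hC : 0 < C) (hγ : 0 < γ)
    (hbound : ∀ x y : ℝ, 0 < x → x ≤ y →
      ((κ y) (Set.Icc 0 x)).toReal ≤ C * (x / y) ^ γ) :
    (∀ y : ℝ, 0 < y → ∀ η : ℝ, 0 < η → η < 1 / 2 →
      1 - C * η ^ γ - 1 / (2 * (1 - η))
        ≤ ((κ y) (Set.Icc (η * y) ((1 - η) * y))).toReal) ∧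
    (∀ y : ℝ, 0 < y →
      (1 : ℝ) / 2 ≤ liminf (fun η : ℝ => ((κ y) (Set.Icc (η * y) ((1 - η) * y))).toReal)
        (nhdsWithin 0 (Set.Ioi 0))) :=
  kernel_interior_mass_general κ hκsupp hK1 hK2 C γ hγ hbound
end
end

section
/- (Direct and dual eigenvalues coincide.) Let τ, β be measurable nonnegative functions on (0,∞) and let k(x,y) ≥ 0 be a measurable fragmentation kernel density with k(x,y) = 0 for x > y and ∫₀^y k(x,y)dx = 1 for all y > 0. Suppose: U ≥ 0 with U ∈ L¹(0,∞), τU ∈ W^{1,1}(0,∞) with (τU)(0) = 0 and τ(x)U(x) → 0 as x → ∞, βU ∈ L¹(0,∞), and (τU)'(x) + (β(x)+λ₁)U(x) = 2∫_x^∞ β(y)k(x,y)U(y)dy for a.e. x > 0; and φ ∈ W^{1,∞}_loc(0,∞), φ ≥ 0, with −τ(x)φ'(x) + (β(x)+λ₂)φ(x) = 2β(x)∫₀ˣ k(z,x)φ(z)dz for a.e. x > 0. Assume moreover the integrability conditions Uφ ∈ L¹(0,∞), βUφ ∈ L¹(0,∞), τU·|φ'| ∈ L¹(0,∞), ∫₀^∞∫₀^∞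 β(y)k(x,y)U(y)φ(x)dxdy < ∞, and τ(x)U(x)φ(x) → 0 as x → 0⁺ and as x → ∞. If ∫₀^∞ U(x)φ(x)dx > 0, then λ₁ = λ₂. -/
open MeasureTheory Set Filter
open scoped NNReal Topology

/-!
Test the direct equation against `φ` and the dual one against `U`. Because `k(x,y) = 0` for
`y < x`, both right-hand sides become the same double integral `∬ β(y) k(x,y) U(y) φ(x)`, up to
Fubini. Subtracting, the `β U φ` terms cancel pointwise and what remains is
`∫ ((τU)' φ + τU φ') + (λ₁ - λ₂) ∫ U φ = 0`. The first integral is that of the derivative of the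
absolutely continuous function `τUφ`, so it vanishes by the boundary conditions at `0` and `∞`.
-/

theorem integral_Ioi_zero_eq_sub_of_intervalIntegral_eq_sub {h F : ℝ → ℝ} {l₀ l : ℝ}
    (hh : IntegrableOn h (Ioi 0))
    (hF : ∀ a b, 0 < a → a ≤ b → ∫ x in a..b, h x = F b - F a)
    (h0 : Tendsto F (𝓝[>] 0) (𝓝 l₀)) (htop : Tendsto F atTop (𝓝 l)) :
    ∫ x in Ioi 0, h x = l - l₀ := by
  have hcover : AECover (volume.restrict (Ioi (0 : ℝ))) (𝓝[>] 0) fun ε => Ioc ε ε⁻¹ :=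
    (aecover_Ioi_of_Ioi (tendsto_id.mono_left nhdsWithin_le_nhds)).inter
      (aecover_Iic tendsto_inv_nhdsGT_zero)
  refine hcover.integral_eq_of_tendsto _ hh
    (((htop.comp tendsto_inv_nhdsGT_zero).sub h0).congr' ?_)
  filter_upwards [Ioo_mem_nhdsGT one_pos] with ε ⟨hε, hε₁⟩
  have hle : ε ≤ ε⁻¹ := hε₁.le.trans (one_le_inv₀ hε |>.2 hε₁.le)
  rw [Measure.restrict_restrict measurableSet_Ioc, Ioc_inter_Ioi, max_eq_left hε.le,
    ← intervalIntegral.integral_of_le hle, hF ε ε⁻¹ hε hle]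
  rfl

theorem intervalIntegral_mul_add_primitive_mul_deriv_eq_sub {D φ φD : ℝ → ℝ} {a b c : ℝ}
    (hD : IntervalIntegrable D volume c b) (ha : a ∈ uIcc c b)
    (hφ : AbsolutelyContinuousOnInterval φ a b)
    (hφD : ∀ᵐ x, x ∈ uIcc a b → HasDerivAt φ (φD x) x) :
    ∫ x in a..b, φ x * D x + (∫ t in c..x, D t) * φD x
      = (∫ t in c..b, D t) * φ b - (∫ t in c..a, D t) * φ a := by
  have hsub : uIcc a b ⊆ uIcc c b := uIcc_subset_uIcc ha right_mem_uIcc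
  have hG : AbsolutelyContinuousOnInterval (fun x => ∫ t in c..x, D t) a b :=
    (hD.absolutelyContinuousOnInterval_intervalIntegral left_mem_uIcc).mono hsub
  rw [← hG.integral_deriv_mul_eq_sub hφ]
  refine intervalIntegral.integral_congr_ae ?_
  filter_upwards [hD.ae_hasDerivAt_integral, hφD] with x hGx hφx hx
  have hx' : x ∈ uIcc a b := uIoc_subset_uIcc hx
  rw [(hGx (hsub hx') c left_mem_uIcc).deriv, (hφx hx').deriv]
  ring

theorem intervalIntegral_mul_add_mul_deriv_eq_sub_of_locallyLipschitz {g D φ φD : ℝ → ℝ}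
    (hD : IntegrableOn D (Ioi 0)) (hg : ∀ x, 0 < x → g x = ∫ t in Ioo 0 x, D t)
    (hφlip : ∀ K : Set ℝ, IsCompact K → K ⊆ Ioi 0 → ∃ L : ℝ≥0, LipschitzOnWith L φ K)
    (hφD : ∀ᵐ x ∂volume.restrict (Ioi 0), HasDerivAt φ (φD x) x)
    {a b : ℝ} (ha : 0 < a) (hab : a ≤ b) :
    ∫ x in a..b, φ x * D x + g x * φD x = g b * φ b - g a * φ a := by
  have hg' : ∀ x, 0 < x → g x = ∫ t in 0..x, D t := fun x hx => by
    rw [hg x hx, intervalIntegral.integral_of_le hx.le, integral_Ioc_eq_integral_Ioo]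
  have hpos : uIcc a b ⊆ Ioi 0 := fun x hx => ha.trans_le (uIcc_of_le hab ▸ hx).1
  obtain ⟨L, hL⟩ := hφlip _ isCompact_uIcc hpos
  have hφD' : ∀ᵐ x, x ∈ uIcc a b → HasDerivAt φ (φD x) x := by
    rw [ae_restrict_iff' measurableSet_Ioi] at hφD
    filter_upwards [hφD] with x hx hxab using hx (hpos hxab)
  have hb : 0 < b := ha.trans_le hab
  have hDb : IntervalIntegrable D volume 0 b :=
    (intervalIntegrable_iff_integrableOn_Ioc_of_le hb.le).2 (hD.mono_set Ioc_subset_Ioi_self)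
  rw [hg' a ha, hg' b hb, ← intervalIntegral_mul_add_primitive_mul_deriv_eq_sub hDb
    (uIcc_of_le hb.le ▸ ⟨ha.le, hab⟩) hL.absolutelyContinuousOnInterval hφD']
  exact intervalIntegral.integral_congr fun x hx => by simp only [hg' x (hpos hx)]

theorem ae_direct_eigenequation_mul {β U φ D : ℝ → ℝ} {k : ℝ → ℝ → ℝ} {lam : ℝ}
    (hksupp : ∀ x y : ℝ, y < x → k x y = 0)
    (hdirect : ∀ᵐ x ∂volume.restrict (Ioi (0 : ℝ)),
      D x + (β x + lam) * U x = 2 * ∫ y in Ioi x, β y * k x y * U y) :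
    ∀ᵐ x ∂volume.restrict (Ioi (0 : ℝ)), φ x * D x + (β x + lam) * (U x * φ x)
      = 2 * ∫ y in Ioi 0, β y * k x y * U y * φ x := by
  filter_upwards [hdirect, ae_restrict_mem measurableSet_Ioi] with x hx hxpos
  have hsupp : ∫ y in Ioi 0, β y * k x y * U y = ∫ y in Ioi x, β y * k x y * U y := by
    refine (setIntegral_eq_of_subset_of_forall_sdiff_eq_zero measurableSet_Ioi
      (Ici_subset_Ioi.2 hxpos) fun y hy => ?_).trans integral_Ici_eq_integral_Ioi
    rw [hksupp x y (not_le.1 hy.2), mul_zero, zero_mul]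
  rw [integral_mul_const, hsupp]
  linear_combination φ x * hx

theorem ae_dual_eigenequation_mul {τ β U φ φD : ℝ → ℝ} {k : ℝ → ℝ → ℝ} {lam : ℝ}
    (hksupp : ∀ x y : ℝ, y < x → k x y = 0)
    (hdual : ∀ᵐ x ∂volume.restrict (Ioi (0 : ℝ)), HasDerivAt φ (φD x) x ∧
      -(τ x) * φD x + (β x + lam) * φ x = 2 * β x * ∫ z in Ioo 0 x, k z x * φ z) :
    ∀ᵐ y ∂volume.restrict (Ioi (0 : ℝ)), -(τ y * U y * φD y) + (β y + lam) * (U y * φ y)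
      = 2 * ∫ x in Ioi 0, β y * k x y * U y * φ x := by
  filter_upwards [hdual, ae_restrict_mem measurableSet_Ioi] with y hy hypos
  have hsupp : ∫ x in Ioi 0, k x y * φ x = ∫ x in Ioo 0 y, k x y * φ x := by
    rw [← integral_Ioc_eq_integral_Ioo]
    refine setIntegral_eq_of_subset_of_forall_sdiff_eq_zero measurableSet_Ioi
      Ioc_subset_Ioi_self fun x hx => ?_
    rw [hksupp x y (lt_of_not_ge fun h => hx.2 ⟨hx.1, h⟩), zero_mul]
  have hfactor : ∫ x in Ioi 0, β y * k x y * U y * φ x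
      = β y * U y * ∫ x in Ioi 0, k x y * φ x := by
    rw [← integral_const_mul]
    exact integral_congr_ae (ae_of_all _ fun x => by ring)
  rw [hfactor, hsupp]
  linear_combination U y * hy.2

theorem direct_dual_eigenvalues_coincide_general
    (τ β : ℝ → ℝ)
    (k : ℝ → ℝ → ℝ)
    (hksupp : ∀ x y : ℝ, y < x → k x y = 0)
    (lam₁ lam₂ : ℝ) (U φ φD D : ℝ → ℝ)
    (hD : IntegrableOn D (Set.Ioi 0))
    (hFTC : ∀ x : ℝ, 0 < x → τ x * U x = ∫ t in Set.Ioo (0:ℝ) x, D t)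
    (hdirect : ∀ᵐ x ∂(volume.restrict (Set.Ioi (0:ℝ))),
      D x + (β x + lam₁) * U x = 2 * ∫ y in Set.Ioi x, β y * k x y * U y)
    (hφlip : ∀ K : Set ℝ, IsCompact K → K ⊆ Set.Ioi 0 →
      ∃ L : ℝ≥0, LipschitzOnWith L φ K)
    (hdual : ∀ᵐ x ∂(volume.restrict (Set.Ioi (0:ℝ))),
      HasDerivAt φ (φD x) x ∧
      -(τ x) * φD x + (β x + lam₂) * φ x
        = 2 * β x * ∫ z in Set.Ioo (0:ℝ) x, k z x * φ z)
    (hint1 : IntegrableOn (fun x => U x * φ x) (Set.Ioi 0))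
    (hint4 : IntegrableOn (fun p : ℝ × ℝ => β p.2 * k p.1 p.2 * U p.2 * φ p.1)
      (Set.Ioi 0 ×ˢ Set.Ioi 0))
    (hlim0 : Tendsto (fun x => τ x * U x * φ x) (nhdsWithin 0 (Set.Ioi 0)) (nhds 0))
    (hliminf : Tendsto (fun x => τ x * U x * φ x) atTop (nhds 0))
    (hpos : 0 < ∫ x in Set.Ioi (0:ℝ), U x * φ x) :
    lam₁ = lam₂ := by
  set μ := volume.restrict (Ioi (0 : ℝ))
  set K : ℝ → ℝ → ℝ := fun x y => β y * k x y * U y * φ x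
  have hK : Integrable (Function.uncurry K) (μ.prod μ) := by
    rwa [Measure.prod_restrict, ← Measure.volume_eq_prod]
  have hP : Integrable (fun x => ∫ y, K x y ∂μ) μ := hK.integral_prod_left
  have hQ : Integrable (fun x => ∫ y, K y x ∂μ) μ := hK.integral_prod_right
  have hPQ : Integrable (fun x => 2 * ((∫ y, K x y ∂μ) - ∫ y, K y x ∂μ)) μ :=
    (hP.sub' hQ).const_mul 2
  have hdiff : ∀ᵐ x ∂μ, φ x * D x + τ x * U x * φD x
      = 2 * ((∫ y, K x y ∂μ) - ∫ y, K y x ∂μ) - (lam₁ - lam₂) * (U x * φ x) := by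
    filter_upwards [ae_direct_eigenequation_mul hksupp hdirect,
      ae_dual_eigenequation_mul (U := U) hksupp hdual] with x h₁ h₂
    linear_combination h₁ - h₂
  have hint : IntegrableOn (fun x => φ x * D x + τ x * U x * φD x) (Ioi 0) :=
    (hPQ.sub' (hint1.const_mul _)).congr (hdiff.mono fun x hx => hx.symm)
  have hzero : ∫ x in Ioi 0, (φ x * D x + τ x * U x * φD x) = 0 := by
    simpa using integral_Ioi_zero_eq_sub_of_intervalIntegral_eq_sub hint
      (fun a b ha hab => intervalIntegral_mul_add_mul_deriv_eq_sub_of_locallyLipschitz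
        (g := fun x => τ x * U x) hD hFTC hφlip (hdual.mono fun x hx => hx.1) ha hab)
      hlim0 hliminf
  rw [integral_congr_ae hdiff, integral_sub hPQ (hint1.const_mul _), integral_const_mul,
    integral_sub hP hQ, integral_integral_swap hK,
    sub_self, mul_zero, zero_sub, integral_const_mul, neg_eq_zero] at hzero
  exact sub_eq_zero.1 ((mul_eq_zero.1 hzero).resolve_right hpos.ne')

/-- **Direct and dual eigenvalues coincide.** If `(λ₁,U)` is a classical solution
of the direct growth-fragmentation eigenequation (with `τU ∈ W^{1,1}(0,∞)`
expressed through its integrable derivative `D`, vanishing at `0` and at `∞`) and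
`(λ₂,φ)` solves the dual equation, then under the stated integrability
conditions, `∫Uφ > 0` implies `λ₁ = λ₂`. -/
theorem direct_dual_eigenvalues_coincide
    (τ β : ℝ → ℝ) (hτmeas : Measurable τ) (hτ0 : ∀ x : ℝ, 0 ≤ τ x)
    (hβmeas : Measurable β) (hβ0 : ∀ x : ℝ, 0 ≤ β x)
    (k : ℝ → ℝ → ℝ) (hkmeas : Measurable fun p : ℝ × ℝ => k p.1 p.2)
    (hk0 : ∀ x y : ℝ, 0 ≤ k x y) (hksupp : ∀ x y : ℝ, y < x → k x y = 0)
    (hknorm : ∀ y : ℝ, 0 < y → ∫ x in Set.Ioo (0:ℝ) y, k x y = 1)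
    (lam₁ lam₂ : ℝ) (U φ φD D : ℝ → ℝ)
    (hU0 : ∀ x : ℝ, 0 < x → 0 ≤ U x) (hUint : IntegrableOn U (Set.Ioi 0))
    (hβU : IntegrableOn (fun x => β x * U x) (Set.Ioi 0))
    (hτUcont : ContinuousOn (fun x => τ x * U x) (Set.Ici 0))
    (hτU0 : τ 0 * U 0 = 0)
    (hD : IntegrableOn D (Set.Ioi 0))
    (hFTC : ∀ x : ℝ, 0 < x → τ x * U x = ∫ t in Set.Ioo (0:ℝ) x, D t)
    (hτUinf : Tendsto (fun x => τ x * U x) atTop (nhds 0))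
    (hdirect : ∀ᵐ x ∂(volume.restrict (Set.Ioi (0:ℝ))),
      D x + (β x + lam₁) * U x = 2 * ∫ y in Set.Ioi x, β y * k x y * U y)
    (hφ0 : ∀ x : ℝ, 0 < x → 0 ≤ φ x)
    (hφlip : ∀ K : Set ℝ, IsCompact K → K ⊆ Set.Ioi 0 →
      ∃ L : ℝ≥0, LipschitzOnWith L φ K)
    (hdual : ∀ᵐ x ∂(volume.restrict (Set.Ioi (0:ℝ))),
      HasDerivAt φ (φD x) x ∧
      -(τ x) * φD x + (β x + lam₂) * φ x
        = 2 * β x * ∫ z in Set.Ioo (0:ℝ) x, k z x * φ z)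
    (hint1 : IntegrableOn (fun x => U x * φ x) (Set.Ioi 0))
    (hint2 : IntegrableOn (fun x => β x * U x * φ x) (Set.Ioi 0))
    (hint3 : IntegrableOn (fun x => τ x * U x * |φD x|) (Set.Ioi 0))
    (hint4 : IntegrableOn (fun p : ℝ × ℝ => β p.2 * k p.1 p.2 * U p.2 * φ p.1)
      (Set.Ioi 0 ×ˢ Set.Ioi 0))
    (hlim0 : Tendsto (fun x => τ x * U x * φ x) (nhdsWithin 0 (Set.Ioi 0)) (nhds 0))
    (hliminf : Tendsto (fun x => τ x * U x * φ x) atTop (nhds 0))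
    (hpos : 0 < ∫ x in Set.Ioi (0:ℝ), U x * φ x) :
    lam₁ = lam₂ :=
  direct_dual_eigenvalues_coincide_general τ β k hksupp lam₁ lam₂ U φ φD D hD hFTC hdirect hφlip
    hdual hint1 hint4 hlim0 hliminf hpos
end

section
/- (Explicit eigenelements for constant growth and linear fragmentation.) Let τ₀, β₀ > 0, and set λ = √(β₀τ₀) and X = X(x) = √(β₀/τ₀)·x. Define U(x) = 2√(β₀/τ₀)·(X + X²/2)·e^{−X−X²/2} and φ(x) = (1+X)/2 for x ≥ 0. Then: ∫₀^∞ U(x)dx = 1; U(0) = 0; for every x > 0, τ₀U'(x) + (β₀x + λ)U(x) = 2β₀∫_x^∞ U(y)dy; for every x > 0, −τ₀φ'(x) + (β₀x + λ)φ(x) = 2β₀∫₀ˣ φ(y)dy; and ∫₀^∞ φ(x)U(x)dx = 1. -/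
/-!
Put `c = √(β₀/τ₀)`, so that `β₀ = τ₀c²`, `λ = τ₀c`, `U(x) = 2c(cx + (cx)²/2)w(x)` and
`φ(x) = (1 + cx)/2` with the Gaussian-type weight `w(x) = e^{-cx-(cx)²/2}`. Both eigenequations
then become `τ₀` times identities in `c` alone, whose integrals have explicit antiderivatives:
`∫ₓ^∞ U = (1 + cx)w(x)` and `∫ₓ^∞ φU = ((1 + cx)² + 1)/2 · w(x)`. Both antiderivatives vanish at
infinity because `w(x) ≤ e^{-cx}`, and at `x = 0` they equal `1`, which gives the normalisations.
-/

open MeasureTheory Set Filter Topology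

noncomputable section

namespace ConstantGrowthEigen

variable (c : ℝ)

def weight (x : ℝ) : ℝ := Real.exp (-(c * x) - (c * x) ^ 2 / 2)

def profile (x : ℝ) : ℝ := 2 * c * (c * x + (c * x) ^ 2 / 2) * weight c x

def profileTail (x : ℝ) : ℝ := (1 + c * x) * weight c x

def dual (x : ℝ) : ℝ := (1 + c * x) / 2

def dualProfileTail (x : ℝ) : ℝ := ((1 + c * x) ^ 2 + 1) / 2 * weight c x

lemma hasDerivAt_weight (x : ℝ) :
    HasDerivAt (weight c) (-(c + c ^ 2 * x) * weight c x) x := by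
  have hlin : HasDerivAt (fun y => c * y) c x := by
    simpa using (hasDerivAt_id x).const_mul c
  refine (hlin.neg.sub ((hlin.pow 2).div_const 2)).exp.congr_deriv ?_
  simp only [weight, Pi.neg_apply, Pi.sub_apply, Pi.pow_apply]
  ring

lemma hasDerivAt_mul_weight {p : ℝ → ℝ} {p' x : ℝ} (hp : HasDerivAt p p' x) :
    HasDerivAt (fun y => p y * weight c y) ((p' - (c + c ^ 2 * x) * p x) * weight c x) x :=
  (hp.mul (hasDerivAt_weight c x)).congr_deriv (by ring)

lemma hasDerivAt_profile (x : ℝ) :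
    HasDerivAt (profile c)
      (2 * c ^ 2 * (1 + c * x) * (1 - c * x - (c * x) ^ 2 / 2) * weight c x) x := by
  have hlin : HasDerivAt (fun y => c * y) c x := by
    simpa using (hasDerivAt_id x).const_mul c
  refine (hasDerivAt_mul_weight c
    ((hlin.add ((hlin.pow 2).div_const 2)).const_mul (2 * c))).congr_deriv ?_
  simp only [Pi.add_apply, Pi.pow_apply]
  ring

lemma hasDerivAt_profileTail (x : ℝ) : HasDerivAt (profileTail c) (-profile c x) x := by
  have hlin : HasDerivAt (fun y => 1 + c * y) c x := by
    simpa using ((hasDerivAt_id x).const_mul c).const_add 1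
  refine (hasDerivAt_mul_weight c hlin).congr_deriv ?_
  simp only [profile]
  ring

lemma hasDerivAt_dualProfileTail (x : ℝ) :
    HasDerivAt (dualProfileTail c) (-(dual c x * profile c x)) x := by
  have hlin : HasDerivAt (fun y => 1 + c * y) c x := by
    simpa using ((hasDerivAt_id x).const_mul c).const_add 1
  refine (hasDerivAt_mul_weight c (((hlin.pow 2).add_const 1).div_const 2)).congr_deriv ?_
  simp only [dual, profile, Pi.pow_apply]
  ring

lemma hasDerivAt_dual (x : ℝ) : HasDerivAt (dual c) (c / 2) x :=
  ((((hasDerivAt_id x).const_mul c).const_add 1).div_const 2).congr_deriv (by ring)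

variable {c}

lemma weight_le_exp_neg (x : ℝ) : weight c x ≤ Real.exp (-(c * x)) :=
  Real.exp_le_exp.2 (by nlinarith [sq_nonneg (c * x)])

lemma tendsto_pow_mul_weight (hc : 0 < c) (n : ℕ) :
    Tendsto (fun x => (c * x) ^ n * weight c x) atTop (𝓝 0) := by
  have hbound : Tendsto (fun x => (c * x) ^ n * Real.exp (-(c * x))) atTop (𝓝 0) :=
    (Real.tendsto_pow_mul_exp_neg_atTop_nhds_zero n).comp (tendsto_id.const_mul_atTop hc)
  refine tendsto_of_tendsto_of_tendsto_of_le_of_le' tendsto_const_nhds hbound ?_ ?_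
  all_goals
    filter_upwards [eventually_ge_atTop 0] with x hx
    have hcx : 0 ≤ (c * x) ^ n := pow_nonneg (mul_nonneg hc.le hx) n
  · exact mul_nonneg hcx (Real.exp_pos _).le
  · exact mul_le_mul_of_nonneg_left (weight_le_exp_neg x) hcx

lemma tendsto_profileTail (hc : 0 < c) : Tendsto (profileTail c) atTop (𝓝 0) := by
  have h := (tendsto_pow_mul_weight hc 0).add (tendsto_pow_mul_weight hc 1)
  rw [add_zero] at h
  refine h.congr fun x => ?_
  simp only [profileTail]
  ring

lemma tendsto_dualProfileTail (hc : 0 < c) : Tendsto (dualProfileTail c) atTop (𝓝 0) := by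
  have h := ((tendsto_pow_mul_weight hc 0).add (tendsto_pow_mul_weight hc 1)).add
    ((tendsto_pow_mul_weight hc 2).div_const 2)
  rw [zero_div, add_zero, add_zero] at h
  refine h.congr fun x => ?_
  simp only [dualProfileTail]
  ring

lemma profile_nonneg (hc : 0 < c) {x : ℝ} (hx : 0 ≤ x) : 0 ≤ profile c x := by
  have hcx : 0 ≤ c * x := mul_nonneg hc.le hx
  unfold profile weight
  positivity

lemma dual_nonneg (hc : 0 < c) {x : ℝ} (hx : 0 ≤ x) : 0 ≤ dual c x := by
  have hcx : 0 ≤ c * x := mul_nonneg hc.le hx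
  unfold dual
  positivity

lemma integral_Ioi_profile (hc : 0 < c) {a : ℝ} (ha : 0 ≤ a) :
    ∫ x in Ioi a, profile c x = profileTail c a := by
  have h := integral_Ioi_of_hasDerivAt_of_nonneg' (g := fun x => -profileTail c x)
    (fun x _ => (hasDerivAt_profileTail c x).neg.congr_deriv (neg_neg _))
    (fun x hx => profile_nonneg hc (ha.trans (le_of_lt hx)))
    (by simpa using (tendsto_profileTail hc).neg)
  simpa using h

lemma integral_Ioi_dual_mul_profile (hc : 0 < c) :
    ∫ x in Ioi 0, dual c x * profile c x = 1 := by
  have h := integral_Ioi_of_hasDerivAt_of_nonneg' (g := fun x => -dualProfileTail c x)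
    (fun x _ => (hasDerivAt_dualProfileTail c x).neg.congr_deriv (neg_neg _))
    (fun x hx => mul_nonneg (dual_nonneg hc (le_of_lt hx)) (profile_nonneg hc (le_of_lt hx)))
    (by simpa using (tendsto_dualProfileTail hc).neg)
  simp [h, dualProfileTail, weight]

lemma integral_Ioo_dual {x : ℝ} (hx : 0 ≤ x) :
    ∫ y in Ioo 0 x, dual c y = (x + c * x ^ 2 / 2) / 2 := by
  have hprim : ∀ y ∈ uIcc 0 x, HasDerivAt (fun y => (y + c * y ^ 2 / 2) / 2) (dual c y) y := by
    intro y _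
    refine (((hasDerivAt_id y).add ((((hasDerivAt_id y).pow 2).const_mul c).div_const 2)
      ).div_const 2).congr_deriv ?_
    simp only [dual, id]
    ring
  rw [← integral_Ioc_eq_integral_Ioo, ← intervalIntegral.integral_of_le hx,
    intervalIntegral.integral_eq_sub_of_hasDerivAt hprim
      ((by unfold dual; fun_prop : Continuous (dual c)).intervalIntegrable 0 x)]
  ring

lemma profile_eigen_eq (x : ℝ) :
    deriv (profile c) x + (c ^ 2 * x + c) * profile c x = 2 * c ^ 2 * profileTail c x := by
  rw [(hasDerivAt_profile c x).deriv]
  simp only [profile, profileTail]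
  ring

lemma dual_eigen_eq {x : ℝ} (hx : 0 ≤ x) :
    -deriv (dual c) x + (c ^ 2 * x + c) * dual c x = 2 * c ^ 2 * ∫ y in Ioo 0 x, dual c y := by
  rw [(hasDerivAt_dual c x).deriv, integral_Ioo_dual hx]
  simp only [dual]
  ring

end ConstantGrowthEigen

open ConstantGrowthEigen in
/-- **Explicit eigenelements for constant growth `τ ≡ τ₀` and linear
fragmentation `β(x) = β₀x`** with uniform fragmentation kernel:
`λ = √(β₀τ₀)`, `U(x) = 2√(β₀/τ₀)(X + X²/2)e^{-X-X²/2}` and `φ(x) = (1+X)/2`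
with `X = √(β₀/τ₀)x` solve the direct and dual eigenequations, with the stated
normalisations. -/
theorem explicit_eigenelements_constant_growth
    (τ₀ β₀ lam : ℝ) (hτ₀ : 0 < τ₀) (hβ₀ : 0 < β₀)
    (hlam : lam = Real.sqrt (β₀ * τ₀))
    (X : ℝ → ℝ) (hX : ∀ x : ℝ, X x = Real.sqrt (β₀ / τ₀) * x)
    (U φ : ℝ → ℝ)
    (hU : ∀ x : ℝ, U x = 2 * Real.sqrt (β₀ / τ₀) * (X x + (X x) ^ 2 / 2) *
      Real.exp (-(X x) - (X x) ^ 2 / 2))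
    (hφ : ∀ x : ℝ, φ x = (1 + X x) / 2) :
    (∫ x in Set.Ioi (0:ℝ), U x = 1) ∧
    U 0 = 0 ∧
    (∀ x : ℝ, 0 < x →
      τ₀ * deriv U x + (β₀ * x + lam) * U x = 2 * β₀ * ∫ y in Set.Ioi x, U y) ∧
    (∀ x : ℝ, 0 < x →
      -τ₀ * deriv φ x + (β₀ * x + lam) * φ x = 2 * β₀ * ∫ y in Set.Ioo 0 x, φ y) ∧
    (∫ x in Set.Ioi (0:ℝ), φ x * U x = 1) := by
  set c := Real.sqrt (β₀ / τ₀)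
  have hc : 0 < c := Real.sqrt_pos.2 (div_pos hβ₀ hτ₀)
  have hβ₀c : β₀ = τ₀ * c ^ 2 := by
    rw [Real.sq_sqrt (div_pos hβ₀ hτ₀).le]
    field_simp
  have hlamc : lam = τ₀ * c := by
    rw [hlam, hβ₀c, show τ₀ * c ^ 2 * τ₀ = (τ₀ * c) ^ 2 by ring, Real.sqrt_sq (by positivity)]
  have hUc : U = profile c := funext fun x => by simp only [hU, hX, profile, weight]
  have hφc : φ = dual c := funext fun x => by simp only [hφ, hX, dual]
  subst hUc hφc
  refine ⟨?_, by simp [hU, hX], fun x hx => ?_, fun x hx => ?_, integral_Ioi_dual_mul_profile hc⟩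
  · simp [integral_Ioi_profile hc le_rfl, profileTail, weight]
  · rw [integral_Ioi_profile hc hx.le, hlamc, hβ₀c]
    linear_combination τ₀ * profile_eigen_eq (c := c) x
  · rw [hlamc, hβ₀c]
    linear_combination τ₀ * dual_eigen_eq (c := c) hx.le
end
end

section
/- (Explicit eigenelements for linear growth and power-law fragmentation.) Let τ₀, β₀ > 0, let n ≥ 1 be an integer, and set a = β₀/(nτ₀), λ = τ₀, U(x) = a^{1/n}·(n/Γ(1/n))·e^{−a xⁿ} and φ(x) = a^{1/n}·(Γ(1/n)/Γ(2/n))·x for x ≥ 0. Then: ∫₀^∞ U(x)dx = 1; for every x > 0, (d/dx)(τ₀·x·U(x)) + (β₀xⁿ + λ)U(x) = 2∫_x^∞ β₀yⁿ·(1/y)·U(y)dy; for every x > 0, −τ₀xφ'(x) + (β₀xⁿ + λ)φ(x) = 2β₀xⁿ·(1/x)·∫₀ˣ φ(y)dy; and ∫₀^∞ φ(x)U(x)dx = 1. -/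
/-!
Write `U = C e^{-a xⁿ}` and note `β₀ = a n τ₀`. Both normalisations are Gamma moments,
`∫₀^∞ x^k e^{-a xⁿ} dx = Γ((k+1)/n) / (n (a^{1/n})^{k+1})`. In the direct equation the
fragmentation integrand is `τ₀ C · a n y^{n-1} e^{-a yⁿ}`, an exact derivative, so the right-hand
side is `2 τ₀ U(x)`; the left-hand side is `2 τ₀ U(x)` too, because
`(x e^{-a xⁿ})' = (1 - a n xⁿ) e^{-a xⁿ}` and the `a n xⁿ` term cancels against `β₀ xⁿ U`.
The dual equation is an identity between linear functions once `∫₀ˣ y dy = x²/2`.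
-/

open MeasureTheory Set Filter Real

namespace GrowthFragmentation

variable {n : ℕ}

theorem hasDerivAt_mul_exp_neg_mul_pow (a : ℝ) (hn : n ≠ 0) (t : ℝ) :
    HasDerivAt (fun s => s * exp (-(a * s ^ n)))
      ((1 - a * n * t ^ n) * exp (-(a * t ^ n))) t := by
  have hexp : HasDerivAt (fun s => exp (-(a * s ^ n)))
      (-(a * (n * t ^ (n - 1))) * exp (-(a * t ^ n))) t :=
    ((hasDerivAt_pow n t).const_mul a).fun_neg.exp.congr_deriv (by ring)
  refine ((hasDerivAt_id t).mul hexp).congr_deriv ?_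
  simp only [id]
  linear_combination (-(a * n) * exp (-(a * t ^ n))) * mul_pow_sub_one hn t

theorem integral_pow_mul_exp_neg_mul_pow {a : ℝ} (ha : 0 < a) (hn : n ≠ 0) (k : ℕ) :
    ∫ x in Ioi 0, x ^ k * exp (-(a * x ^ n)) =
      Gamma ((k + 1) / n) / (n * (a ^ (1 / n : ℝ)) ^ (k + 1)) := by
  have hmoment := integral_rpow_mul_exp_neg_mul_rpow (by positivity : (0 : ℝ) < n)
    (by linarith [k.cast_nonneg (α := ℝ)] : -1 < (k : ℝ)) ha
  have hpow : a ^ (-((k : ℝ) + 1) / n) = ((a ^ (1 / n : ℝ)) ^ (k + 1))⁻¹ := by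
    rw [neg_div, rpow_neg ha.le, ← rpow_natCast, ← rpow_mul ha.le, one_div_mul_eq_div]
    push_cast
    rfl
  simp only [rpow_natCast, neg_mul, hpow] at hmoment
  rw [hmoment]
  field_simp

theorem integral_Ioi_mul_pow_mul_exp_neg_mul_pow {a : ℝ} (ha : 0 < a) (hn : n ≠ 0) {x : ℝ}
    (hx : 0 ≤ x) :
    ∫ y in Ioi x, a * n * y ^ (n - 1) * exp (-(a * y ^ n)) = exp (-(a * x ^ n)) := by
  have hderiv : ∀ y ∈ Ici x, HasDerivAt (fun s => -exp (-(a * s ^ n)))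
      (a * n * y ^ (n - 1) * exp (-(a * y ^ n))) y := by
    intro y _
    exact ((hasDerivAt_pow n y).const_mul a).fun_neg.exp.fun_neg.congr_deriv (by ring)
  have hnonneg : ∀ y ∈ Ioi x, 0 ≤ a * n * y ^ (n - 1) * exp (-(a * y ^ n)) := by
    intro y hy
    have : 0 ≤ y := hx.trans hy.out.le
    positivity
  have hlim : Tendsto (fun s => -exp (-(a * s ^ n))) atTop (nhds (-0)) :=
    (tendsto_exp_atBot.comp (tendsto_neg_atTop_atBot.comp
      ((tendsto_pow_atTop hn).const_mul_atTop ha))).neg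
  rw [integral_Ioi_of_hasDerivAt_of_nonneg' hderiv hnonneg hlim]
  ring

theorem direct_eigen_equation_exp_neg_mul_pow {a : ℝ} (τ₀ C : ℝ) (ha : 0 < a) (hn : n ≠ 0)
    {x : ℝ} (hx : 0 < x) :
    deriv (fun t => τ₀ * t * (C * exp (-(a * t ^ n)))) x
        + (a * n * τ₀ * x ^ n + τ₀) * (C * exp (-(a * x ^ n)))
      = 2 * ∫ y in Ioi x, a * n * τ₀ * y ^ n * (1 / y) * (C * exp (-(a * y ^ n))) := by
  have hderiv : HasDerivAt (fun t => τ₀ * t * (C * exp (-(a * t ^ n))))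
      (τ₀ * C * ((1 - a * n * x ^ n) * exp (-(a * x ^ n)))) x :=
    ((hasDerivAt_mul_exp_neg_mul_pow a hn x).const_mul (τ₀ * C)).congr_of_eventuallyEq
      (Eventually.of_forall fun t => by ring)
  have htail : ∫ y in Ioi x, a * n * τ₀ * y ^ n * (1 / y) * (C * exp (-(a * y ^ n)))
      = τ₀ * C * exp (-(a * x ^ n)) := by
    rw [← integral_Ioi_mul_pow_mul_exp_neg_mul_pow ha hn hx.le, ← integral_const_mul]
    refine setIntegral_congr_fun measurableSet_Ioi fun y hy => ?_
    have hy : y ≠ 0 := (hx.trans hy).ne'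
    rw [← mul_pow_sub_one hn y]
    field_simp
  rw [hderiv.deriv, htail]
  ring

theorem dual_eigen_equation_linear (τ₀ β₀ c : ℝ) {x : ℝ} (hx : 0 < x) :
    -(τ₀ * x) * deriv (fun y => c * y) x + (β₀ * x ^ n + τ₀) * (c * x)
      = 2 * β₀ * x ^ n * (1 / x) * ∫ y in Ioo 0 x, c * y := by
  have hint : ∫ y in Ioo 0 x, c * y = c * (x ^ 2 / 2) := by
    rw [← integral_Ioc_eq_integral_Ioo, ← intervalIntegral.integral_of_le hx.le,
      intervalIntegral.integral_const_mul, integral_id]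
    ring
  rw [deriv_const_mul_field', deriv_id'', hint]
  field_simp
  ring

end GrowthFragmentation

open GrowthFragmentation

/-- **Explicit eigenelements for linear growth `τ(x) = τ₀x` and power-law
fragmentation `β(x) = β₀xⁿ`** with uniform fragmentation kernel:
with `a = β₀/(nτ₀)`, the triple `λ = τ₀`,
`U(x) = a^{1/n}(n/Γ(1/n))e^{-axⁿ}`, `φ(x) = a^{1/n}(Γ(1/n)/Γ(2/n))x` solves the
direct and dual eigenequations, with the stated normalisations. -/
theorem explicit_eigenelements_linear_growth
    (τ₀ β₀ : ℝ) (hτ₀ : 0 < τ₀) (hβ₀ : 0 < β₀)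
    (n : ℕ) (hn : 1 ≤ n)
    (a lam : ℝ) (ha : a = β₀ / (n * τ₀)) (hlam : lam = τ₀)
    (U φ : ℝ → ℝ)
    (hU : ∀ x : ℝ, U x = a ^ ((1:ℝ) / n) * (n / Real.Gamma (1 / n)) *
      Real.exp (-(a * x ^ n)))
    (hφ : ∀ x : ℝ, φ x = a ^ ((1:ℝ) / n) *
      (Real.Gamma (1 / n) / Real.Gamma (2 / n)) * x) :
    (∫ x in Set.Ioi (0:ℝ), U x = 1) ∧
    (∀ x : ℝ, 0 < x →
      deriv (fun t => τ₀ * t * U t) x + (β₀ * x ^ n + lam) * U x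
        = 2 * ∫ y in Set.Ioi x, β₀ * y ^ n * (1 / y) * U y) ∧
    (∀ x : ℝ, 0 < x →
      -(τ₀ * x) * deriv φ x + (β₀ * x ^ n + lam) * φ x
        = 2 * β₀ * x ^ n * (1 / x) * ∫ y in Set.Ioo (0:ℝ) x, φ y) ∧
    (∫ x in Set.Ioi (0:ℝ), φ x * U x = 1) := by
  have hn0 : n ≠ 0 := by omega
  have hapos : 0 < a := by rw [ha]; positivity
  have hβ : β₀ = a * n * τ₀ := by rw [ha]; field_simp
  have hmass := integral_pow_mul_exp_neg_mul_pow hapos hn0 0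
  have hmean := integral_pow_mul_exp_neg_mul_pow hapos hn0 1
  simp only [pow_zero, one_mul, pow_one, Nat.cast_zero, Nat.cast_one, zero_add,
    one_add_one_eq_two] at hmass hmean
  have hφU : ∀ x, φ x * U x = a ^ ((1:ℝ) / n) * (Gamma (1 / n) / Gamma (2 / n)) *
      (a ^ ((1:ℝ) / n) * (n / Gamma (1 / n))) * (x * exp (-(a * x ^ n))) := fun x => by
    rw [hφ, hU]; ring
  subst lam
  refine ⟨?_, fun x hx => ?_, fun x hx => ?_, ?_⟩
  · simp only [hU, integral_const_mul, hmass]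
    field_simp
  · rw [funext hU, hβ]
    exact direct_eigen_equation_exp_neg_mul_pow τ₀ _ hapos hn0 hx
  · rw [funext hφ]
    exact dual_eigen_equation_linear τ₀ β₀ _ hx
  · simp only [hφU, integral_const_mul, hmean]
    field_simp
end

section
/- (Non-existence for linear growth and constant fragmentation.) Let τ₁ > 0, β₀ > 0, let τ(x) = τ₁x and β ≡ β₀, and let κ be a fragmentation kernel satisfying (K1) and (K2). Suppose (λ,U) solves the truncated eigenproblem on (0,∞) (R = ∞) with inflow δ = 0 in integrated form, with U ≥ 0, ∫₀^∞ U = 1, xU ∈ L¹(0,∞), 0 < ∫₀^∞ xU(x)dx < ∞, and τ₁xU(x) → 0 and τ₁x²U(x) → 0 as x → ∞. Then λ = β₀ and λ = τ₁. Consequently, if τ₁ ≠ β₀ then no such (λ,U) exists. -/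
open MeasureTheory Set Filter
open scoped ENNReal NNReal

noncomputable section

/-! Letting `x → ∞` in the equation, the flux `τ₁ x U(x)` vanishes, `∫₀ˣ U → 1`, and the
fragmentation term tends to `2 β₀ ∫ U = 2 β₀`; hence `λ + β₀ = 2 β₀`. With `λ = β₀` the equation
reduces to `τ₁ x U(x) = 2 β₀ ∫_{y > x} U(y) κ([0,x], y) dy`. Integrating in `x` and exchanging the
integrals, the inner integral is `∫₀ʸ κ([0,x], y) dx = y - ∫ t dκ(t, y) = y / 2` by (K2), so
`τ₁ ∫ x U = β₀ ∫ x U`, and the first moment is positive. -/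

open ProbabilityTheory Function Topology

lemma eq_of_tendsto_atTop_of_ae_eq {α : Type*} [TopologicalSpace α] [T2Space α]
    {f g : ℝ → α} {a b : α} {c : ℝ} (hfg : f =ᵐ[volume.restrict (Ioi c)] g)
    (hf : Tendsto f atTop (𝓝 a)) (hg : Tendsto g atTop (𝓝 b)) : a = b := by
  have : (atTop ⊓ ae (volume.restrict (Ioi c))).NeBot := by
    refine inf_neBot_iff_frequently_right.2 fun {p} hp => frequently_atTop.2 fun N => ?_
    have hpos : volume.restrict (Ioi c) (Ici N ∩ {x | p x}) ≠ 0 := by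
      rw [measure_inter_conull (s := Ici N) (mem_ae_iff.1 hp),
        Measure.restrict_apply measurableSet_Ici]
      have hsub : Ioi (max N c) ⊆ Ici N ∩ Ioi c := fun x hx =>
        ⟨(le_max_left N c).trans hx.le, (le_max_right N c).trans_lt hx⟩
      exact ne_bot_of_le_ne_bot (by simp) (measure_mono hsub)
    exact nonempty_of_measure_ne_zero hpos
  exact tendsto_nhds_unique ((hf.mono_left inf_le_left).congr' (hfg.filter_mono inf_le_right))
    (hg.mono_left inf_le_left)

section

variable {E : Type*} [NormedAddCommGroup E] [NormedSpace ℝ E]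

lemma setIntegral_Ioi_indicator_Iio (f : ℝ → E) (a y : ℝ) :
    ∫ x in Ioi a, (Iio y).indicator f x = ∫ x in Ioo a y, f x := by
  rw [integral_indicator measurableSet_Iio, Measure.restrict_restrict measurableSet_Iio,
    Iio_inter_Ioi]

lemma setIntegral_Ioi_indicator_Ioi (f : ℝ → E) {a x : ℝ} (hax : a ≤ x) :
    ∫ y in Ioi a, (Ioi x).indicator f y = ∫ y in Ioi x, f y := by
  rw [integral_indicator measurableSet_Ioi, Measure.restrict_restrict measurableSet_Ioi,
    Ioi_inter_Ioi, sup_eq_left.2 hax]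

theorem integral_Ioi_integral_Ioi_swap {F : ℝ → ℝ → E} {a : ℝ}
    (hF : Integrable ({p : ℝ × ℝ | p.1 < p.2}.indicator (uncurry F))
      ((volume.restrict (Ioi a)).prod (volume.restrict (Ioi a)))) :
    ∫ x in Ioi a, ∫ y in Ioi x, F x y = ∫ y in Ioi a, ∫ x in Ioo a y, F x y := by
  set T := {p : ℝ × ℝ | p.1 < p.2}
  have hrow : ∀ x ∈ Ioi a, ∫ y in Ioi x, F x y = ∫ y in Ioi a, T.indicator (uncurry F) (x, y) := by
    intro x hx
    rw [← setIntegral_Ioi_indicator_Ioi _ (le_of_lt hx)]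
    congr 1 with y
  have hcol : ∀ y, ∫ x in Ioo a y, F x y = ∫ x in Ioi a, T.indicator (uncurry F) (x, y) := by
    intro y
    rw [← setIntegral_Ioi_indicator_Iio]
    congr 1 with x
  rw [setIntegral_congr_fun measurableSet_Ioi hrow,
    integral_integral_swap (f := fun x y => T.indicator (uncurry F) (x, y)) hF]
  simp_rw [hcol]

lemma tendsto_setIntegral_Ioo {f : ℝ → E} {a : ℝ} (hf : IntegrableOn f (Ioi a)) :
    Tendsto (fun x => ∫ y in Ioo a x, f y) atTop (𝓝 (∫ y in Ioi a, f y)) := by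
  have := tendsto_setIntegral_of_monotone (fun x => measurableSet_Ioo)
    (fun _ _ h => Ioo_subset_Ioo_right h) (iUnion_Ioo_right a ▸ hf)
  rwa [iUnion_Ioo_right] at this

end

theorem integral_measureReal_Icc_eq_sub_integral {ν : Measure ℝ} [IsProbabilityMeasure ν]
    {y : ℝ} (hν : ∀ᵐ t ∂ν, t ∈ Icc 0 y) :
    ∫ x in Ioo 0 y, ν.real (Icc 0 x) = y - ∫ t, t ∂ν := by
  have hint : Integrable (fun t => t) ν :=
    Integrable.of_bound (by fun_prop) y <| hν.mono fun t ht => by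
      rw [Real.norm_of_nonneg ht.1]; exact ht.2
  have htail : ∀ s, ν.real {t | s < t} = 1 - ν.real (Icc 0 s) := by
    intro s
    rw [← probReal_compl_eq_one_sub measurableSet_Icc]
    exact measureReal_congr (eventuallyEq_set.2 (hν.mono fun t ht => by simp [ht.1]))
  have hvanish : ∀ s, y ≤ s → ν.real {t | s < t} = 0 := by
    intro s hs
    rw [measureReal_eq_zero_iff, measure_eq_zero_iff_ae_notMem]
    exact hν.mono fun t ht => by simpa using ht.2.trans hs
  have hcdf : IntegrableOn (fun x => ν.real (Icc 0 x)) (Ioo 0 y) :=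
    have hmono : Monotone fun x => ν.real (Icc 0 x) := fun _ _ h =>
      measureReal_mono (Icc_subset_Icc_right h)
    Measure.integrableOn_of_bounded (M := 1) (by simp) hmono.measurable.aestronglyMeasurable
      (ae_of_all _ fun x => by
        rw [Real.norm_of_nonneg measureReal_nonneg]; exact measureReal_le_one)
  rw [hint.integral_eq_integral_meas_lt (hν.mono fun t ht => ht.1),
    setIntegral_eq_of_subset_of_forall_sdiff_eq_zero measurableSet_Ioi Ioo_subset_Ioi_self
      (fun s hs => hvanish s (not_lt.1 fun h => hs.2 ⟨hs.1, h⟩)),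
    setIntegral_congr_fun measurableSet_Ioo (fun s _ => htail s),
    integral_sub (integrable_const 1) hcdf]
  obtain ⟨t, ht⟩ := hν.exists
  simp [ht.1.trans ht.2]

/-- The properties of `(x, y) ↦ κ([0, x], y)` that the argument uses; `integral_Ioo` is where
(K2) enters. -/
structure IsFragmentationCDF (G : ℝ → ℝ → ℝ) : Prop where
  measurable : Measurable (uncurry G)
  nonneg : ∀ x y, 0 ≤ G x y
  le_one : ∀ x y, G x y ≤ 1
  eq_one : ∀ ⦃x y⦄, 0 < y → y ≤ x → G x y = 1
  integral_Ioo : ∀ ⦃y⦄, 0 < y → ∫ x in Ioo 0 y, G x y = y / 2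

namespace IsFragmentationCDF

variable {G : ℝ → ℝ → ℝ} {U : ℝ → ℝ}

lemma norm_mul_le (hG : IsFragmentationCDF G) (u x y : ℝ) : ‖u * G x y‖ ≤ ‖u‖ := by
  rw [norm_mul, Real.norm_of_nonneg (hG.nonneg x y)]
  exact mul_le_of_le_one_right (norm_nonneg u) (hG.le_one x y)

lemma integrableOn_mul (hG : IsFragmentationCDF G) {s : Set ℝ} (hU : IntegrableOn U s) (x : ℝ) :
    IntegrableOn (fun y => U y * G x y) s :=
  hU.norm.mono' (hU.aestronglyMeasurable.mul
    (hG.measurable.comp measurable_prodMk_left).aestronglyMeasurable)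
    (ae_of_all _ fun y => hG.norm_mul_le (U y) x y)

lemma integrableOn_Ioo (hG : IsFragmentationCDF G) (y z : ℝ) :
    IntegrableOn (fun x => G x y) (Ioo 0 z) :=
  Measure.integrableOn_of_bounded (M := 1) (by simp)
    (hG.measurable.comp (measurable_id.prodMk measurable_const)).aestronglyMeasurable
    (ae_of_all _ fun x => by rw [Real.norm_of_nonneg (hG.nonneg x y)]; exact hG.le_one x y)

lemma tendsto_setIntegral_mul (hG : IsFragmentationCDF G) (hU : IntegrableOn U (Ioi 0)) :
    Tendsto (fun x => ∫ y in Ioi 0, U y * G x y) atTop (𝓝 (∫ y in Ioi 0, U y)) := by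
  refine tendsto_integral_filter_of_dominated_convergence (fun y => ‖U y‖)
    (.of_forall fun x => (hG.integrableOn_mul hU x).aestronglyMeasurable)
    (.of_forall fun x => ae_of_all _ fun y => hG.norm_mul_le (U y) x y) hU.norm ?_
  filter_upwards [ae_restrict_mem measurableSet_Ioi] with y hy
  refine tendsto_const_nhds.congr' ?_
  filter_upwards [eventually_ge_atTop y] with x hx
  rw [hG.eq_one hy hx, mul_one]

lemma setIntegral_Ioi_mul_eq_add (hG : IsFragmentationCDF G) (hU : IntegrableOn U (Ioi 0))
    {x : ℝ} (hx : 0 ≤ x) :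
    ∫ y in Ioi 0, U y * G x y = (∫ y in Ioo 0 x, U y) + ∫ y in Ioi x, U y * G x y := by
  have hint := hG.integrableOn_mul hU x
  have hIoc : ∫ y in Ioc 0 x, U y * G x y = ∫ y in Ioc 0 x, U y :=
    setIntegral_congr_fun measurableSet_Ioc fun y hy => by rw [hG.eq_one hy.1 hy.2, mul_one]
  rw [← Ioc_union_Ioi_eq_Ioi hx, setIntegral_union (Ioc_disjoint_Ioi le_rfl) measurableSet_Ioi
    (hint.mono_set Ioc_subset_Ioi_self) (hint.mono_set (Ioi_subset_Ioi hx)), hIoc,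
    integral_Ioc_eq_integral_Ioo]

lemma integrable_indicator_lt_mul (hG : IsFragmentationCDF G) (hU : IntegrableOn U (Ioi 0))
    (hxU : IntegrableOn (fun x => x * U x) (Ioi 0)) :
    Integrable ({p : ℝ × ℝ | p.1 < p.2}.indicator (uncurry fun x y => U y * G x y))
      ((volume.restrict (Ioi 0)).prod (volume.restrict (Ioi 0))) := by
  have hsect : ∀ x y, {p : ℝ × ℝ | p.1 < p.2}.indicator (uncurry fun x y => U y * G x y) (x, y)
      = (Iio y).indicator (fun x => U y * G x y) x := fun x y => by
    by_cases h : x < y <;> simp [h]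
  have hmeas : AEStronglyMeasurable
      ({p : ℝ × ℝ | p.1 < p.2}.indicator (uncurry fun x y => U y * G x y))
      ((volume.restrict (Ioi 0)).prod (volume.restrict (Ioi 0))) :=
    (hU.aestronglyMeasurable.comp_snd.mul hG.measurable.aestronglyMeasurable).indicator
      (measurableSet_lt measurable_fst measurable_snd)
  refine (integrable_prod_iff' hmeas).2 ⟨ae_of_all _ fun y => ?_, ?_⟩
  · simp_rw [hsect]
    rw [integrable_indicator_iff measurableSet_Iio, IntegrableOn,
      Measure.restrict_restrict measurableSet_Iio, Iio_inter_Ioi]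
    exact (hG.integrableOn_Ioo y y).const_mul (U y)
  · refine (hxU.norm.div_const 2).congr ?_
    filter_upwards [ae_restrict_mem measurableSet_Ioi] with y hy
    simp_rw [hsect, norm_indicator_eq_indicator_norm]
    rw [setIntegral_Ioi_indicator_Iio]
    simp_rw [norm_mul, Real.norm_of_nonneg (hG.nonneg _ y)]
    rw [integral_const_mul, hG.integral_Ioo hy, Real.norm_of_nonneg (le_of_lt hy)]
    ring

theorem eigenvalue_eq (hG : IsFragmentationCDF G) {τ : ℝ → ℝ} {lam β₀ : ℝ}
    (hU : IntegrableOn U (Ioi 0)) (hUnorm : ∫ x in Ioi 0, U x = 1)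
    (hlim : Tendsto (fun x => τ x * U x) atTop (𝓝 0))
    (heq : ∀ᵐ x ∂(volume.restrict (Ioi 0)),
      τ x * U x + (lam + β₀) * ∫ y in Ioo 0 x, U y = 2 * β₀ * ∫ y in Ioi 0, U y * G x y) :
    lam = β₀ := by
  have hmass := tendsto_setIntegral_Ioo hU
  have hfrag := hG.tendsto_setIntegral_mul hU
  rw [hUnorm] at hmass hfrag
  have := eq_of_tendsto_atTop_of_ae_eq heq (hlim.add (hmass.const_mul _)) (hfrag.const_mul _)
  linarith

theorem setIntegral_flux_eq_mul_moment (hG : IsFragmentationCDF G) {τ : ℝ → ℝ} {β₀ : ℝ}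
    (hU : IntegrableOn U (Ioi 0)) (hxU : IntegrableOn (fun x => x * U x) (Ioi 0))
    (heq : ∀ᵐ x ∂(volume.restrict (Ioi 0)),
      τ x * U x + (β₀ + β₀) * ∫ y in Ioo 0 x, U y = 2 * β₀ * ∫ y in Ioi 0, U y * G x y) :
    ∫ x in Ioi 0, τ x * U x = β₀ * ∫ x in Ioi 0, x * U x := by
  have hflux : ∀ᵐ x ∂(volume.restrict (Ioi 0)),
      τ x * U x = 2 * β₀ * ∫ y in Ioi x, U y * G x y := by
    filter_upwards [heq, ae_restrict_mem measurableSet_Ioi] with x hx hx0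
    rw [hG.setIntegral_Ioi_mul_eq_add hU (le_of_lt hx0)] at hx
    linear_combination hx
  calc ∫ x in Ioi 0, τ x * U x
      = 2 * β₀ * ∫ x in Ioi 0, ∫ y in Ioi x, U y * G x y := by
        rw [integral_congr_ae hflux, integral_const_mul]
    _ = 2 * β₀ * ∫ y in Ioi 0, ∫ x in Ioo 0 y, U y * G x y := by
        rw [integral_Ioi_integral_Ioi_swap (hG.integrable_indicator_lt_mul hU hxU)]
    _ = 2 * β₀ * ∫ y in Ioi 0, y * U y / 2 := by
        congr 1
        refine setIntegral_congr_fun measurableSet_Ioi fun y hy => ?_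
        rw [integral_const_mul, hG.integral_Ioo hy]
        ring
    _ = β₀ * ∫ x in Ioi 0, x * U x := by
        rw [integral_div]
        ring

end IsFragmentationCDF

/-- Off `(0, ∞)`, where (K1) says nothing, `κ` is replaced by `δ₀`, which makes it a Markov kernel
on all of `ℝ`. -/
def fragKernel (κ : ℝ → Measure ℝ) (y : ℝ) : Measure ℝ :=
  if 0 < y then κ y else Measure.dirac 0

namespace fragKernel

variable {κ : ℝ → Measure ℝ}

lemma of_pos {y : ℝ} (hy : 0 < y) : fragKernel κ y = κ y := if_pos hy

lemma isProbabilityMeasure (hK1 : K1 κ) (y : ℝ) : IsProbabilityMeasure (fragKernel κ y) := by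
  unfold fragKernel
  split_ifs with hy
  · exact hK1 y hy
  · infer_instance

lemma measurable_integral (hκmeas : KernelMeasurable κ) {ψ : ℝ → ℝ} (hψ : Continuous ψ) :
    Measurable fun y => ∫ t, ψ t ∂fragKernel κ y := by
  have : (fun y => ∫ t, ψ t ∂fragKernel κ y) = fun y => if 0 < y then ∫ t, ψ t ∂κ y else ψ 0 := by
    ext y
    unfold fragKernel
    split_ifs <;> simp
  rw [this]
  exact Measurable.ite measurableSet_Ioi (hκmeas ψ hψ) measurable_const

protected lemma measurable (hK1 : K1 κ) (hκmeas : KernelMeasurable κ) :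
    Measurable (fragKernel κ) := by
  have := isProbabilityMeasure hK1
  refine .measure_of_isPiSystem_of_isProbabilityMeasure (borel_eq_generateFrom_Iic ℝ)
    isPiSystem_Iic ?_
  rintro _ ⟨a, rfl⟩
  have hlim := fun y => tendsto_integral_thickenedIndicator_of_isClosed (fragKernel κ y)
    (isClosed_Iic (a := a)) (fun n : ℕ => Nat.one_div_pos_of_nat)
    tendsto_one_div_add_atTop_nhds_zero_nat
  have hreal : Measurable fun y => (fragKernel κ y).real (Iic a) :=
    measurable_of_tendsto_metrizable (fun n => measurable_integral hκmeas (by fun_prop))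
      (tendsto_pi_nhds.2 hlim)
  convert hreal.ennreal_ofReal with y
  exact (ofReal_measureReal).symm

lemma measurable_measureReal_Icc (hK1 : K1 κ) (hκmeas : KernelMeasurable κ) :
    Measurable fun p : ℝ × ℝ => (fragKernel κ p.2).real (Icc 0 p.1) := by
  have := isProbabilityMeasure hK1
  let η : Kernel ℝ ℝ := ⟨fragKernel κ, fragKernel.measurable hK1 hκmeas⟩
  have : IsMarkovKernel η := ⟨isProbabilityMeasure hK1⟩
  have hs : MeasurableSet {q : (ℝ × ℝ) × ℝ | 0 ≤ q.2 ∧ q.2 ≤ q.1.1} :=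
    (measurableSet_le measurable_const measurable_snd).inter
      (measurableSet_le measurable_snd (measurable_fst.fst))
  exact (Kernel.measurable_kernel_prodMk_left (κ := Kernel.prodMkLeft ℝ η) hs).ennreal_toReal

lemma isFragmentationCDF (hκsupp : KernelSupport κ) (hκmeas : KernelMeasurable κ)
    (hK1 : K1 κ) (hK2 : K2 κ) : IsFragmentationCDF fun x y => (fragKernel κ y).real (Icc 0 x) where
  measurable := measurable_measureReal_Icc hK1 hκmeas
  nonneg _ _ := measureReal_nonneg
  le_one x y := by have := isProbabilityMeasure hK1 y; exact measureReal_le_one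
  eq_one x y hy hyx := by
    have := hK1 y hy
    have hnull : κ y (Icc 0 x)ᶜ = 0 :=
      measure_mono_null (compl_subset_compl.2 (Icc_subset_Icc_right hyx)) (hκsupp y hy)
    rw [of_pos hy, measureReal_def, (prob_compl_eq_zero_iff measurableSet_Icc).1 hnull,
      ENNReal.toReal_one]
  integral_Ioo y hy := by
    have := hK1 y hy
    simp only [of_pos hy]
    rw [integral_measureReal_Icc_eq_sub_integral (mem_ae_iff.2 (hκsupp y hy)), hK2 y hy]
    ring

end fragKernel

lemma TruncEigen.ae_eq_fragKernel {τ : ℝ → ℝ} {β₀ lam : ℝ} {κ : ℝ → Measure ℝ} {U : ℝ → ℝ}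
    (h : TruncEigen τ (fun _ => β₀) κ 0 (Ioi 0) lam U) :
    ∀ᵐ x ∂(volume.restrict (Ioi 0)), τ x * U x + (lam + β₀) * ∫ y in Ioo 0 x, U y
      = 2 * β₀ * ∫ y in Ioi 0, U y * (fragKernel κ y).real (Icc 0 x) := by
  filter_upwards [h.2.2] with x hx
  have hκ : ∫ y in Ioi 0, β₀ * U y * (κ y (Icc 0 x)).toReal
      = β₀ * ∫ y in Ioi 0, U y * (fragKernel κ y).real (Icc 0 x) := by
    rw [← integral_const_mul]
    refine setIntegral_congr_fun measurableSet_Ioi fun y hy => ?_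
    rw [fragKernel.of_pos hy, measureReal_def]
    ring
  rw [integral_const_mul, hκ] at hx
  linear_combination hx

theorem nonexistence_linear_growth_constant_fragmentation_general
    (τ₁ β₀ : ℝ)
    (κ : ℝ → Measure ℝ)
    (hκsupp : KernelSupport κ) (hκmeas : KernelMeasurable κ)
    (hK1 : K1 κ) (hK2 : K2 κ)
    (lam : ℝ) (U : ℝ → ℝ)
    (hTE : TruncEigen (fun x => τ₁ * x) (fun _ => β₀) κ 0 (Set.Ioi 0) lam U)
    (hUnorm : ∫ x in Set.Ioi (0:ℝ), U x = 1)
    (hxU : IntegrableOn (fun x => x * U x) (Set.Ioi 0))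
    (hxUpos : 0 < ∫ x in Set.Ioi (0:ℝ), x * U x)
    (hlim1 : Tendsto (fun x => τ₁ * x * U x) atTop (nhds 0)) :
    lam = β₀ ∧ lam = τ₁ ∧ τ₁ = β₀ := by
  have hG := fragKernel.isFragmentationCDF hκsupp hκmeas hK1 hK2
  have heq := hTE.ae_eq_fragKernel
  obtain rfl : lam = β₀ := hG.eigenvalue_eq hTE.1 hUnorm hlim1 heq
  have hmoment := hG.setIntegral_flux_eq_mul_moment hTE.1 hxU heq
  simp_rw [mul_assoc τ₁] at hmoment
  rw [integral_const_mul] at hmoment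
  have hτ : τ₁ = lam := mul_right_cancel₀ hxUpos.ne' hmoment
  exact ⟨rfl, hτ.symm, hτ⟩

/-- **Non-existence for linear growth `τ(x)=τ₁x` and constant fragmentation
`β ≡ β₀`.** A normalised nonnegative decaying solution of the eigenproblem on
`(0,∞)` in integrated form would satisfy both `λ = β₀` and `λ = τ₁`; hence
`τ₁ = β₀`, and for `τ₁ ≠ β₀` no such solution exists. -/
theorem nonexistence_linear_growth_constant_fragmentation
    (τ₁ β₀ : ℝ) (hτ₁ : 0 < τ₁) (hβ₀ : 0 < β₀)
    (κ : ℝ → Measure ℝ)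
    (hκfin : ∀ y : ℝ, 0 < y → IsFiniteMeasure (κ y))
    (hκsupp : KernelSupport κ) (hκmeas : KernelMeasurable κ)
    (hK1 : K1 κ) (hK2 : K2 κ)
    (lam : ℝ) (U : ℝ → ℝ)
    (hTE : TruncEigen (fun x => τ₁ * x) (fun _ => β₀) κ 0 (Set.Ioi 0) lam U)
    (hU0 : ∀ᵐ x ∂(volume.restrict (Set.Ioi (0:ℝ))), 0 ≤ U x)
    (hUnorm : ∫ x in Set.Ioi (0:ℝ), U x = 1)
    (hxU : IntegrableOn (fun x => x * U x) (Set.Ioi 0))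
    (hxUpos : 0 < ∫ x in Set.Ioi (0:ℝ), x * U x)
    (hlim1 : Tendsto (fun x => τ₁ * x * U x) atTop (nhds 0))
    (hlim2 : Tendsto (fun x => τ₁ * x ^ 2 * U x) atTop (nhds 0)) :
    lam = β₀ ∧ lam = τ₁ ∧ τ₁ = β₀ :=
  nonexistence_linear_growth_constant_fragmentation_general τ₁ β₀ κ hκsupp hκmeas hK1 hK2 lam U hTE
    hUnorm hxU hxUpos hlim1
end
end
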